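/- arXiv:2406.02094 — 12 statements merged into one kernel-verified Lean document; each statement's English description precedes it below -/
import Mathlib

section
/- Variable-shift lemma for ω-bisimulations: if B is an ω-bisimulation between Kripke structures M and N with (μ, μ') B₁ (ν, ν') for some μ, μ' ∈ |M| and ν, ν' ∈ |N|, then the family Bˣ = (Bˣ_ℓ) defined by (w̄, w) Bˣ_ℓ (v̄, v) iff (μ·w̄, w) B_{ℓ+1} (ν·v̄, v) is an ω-bisimulation between the expansions M[x↦μ] and N[x↦ν] (treating x as an additional nominal interpreted as μ, resp. ν), and μ' Bˣ₀ ν'. -/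
/-- Actions over a set `R` of binary relation symbols. -/
inductive Act (R : Type) : Type
  | rel : R → Act R
  | union : Act R → Act R → Act R
  | comp : Act R → Act R → Act R
  | star : Act R → Act R

/-- A Kripke structure over relation symbols `R` and propositional symbols `P`,
with set of worlds `W` (interpretations of nominals are given separately). -/
structure Kripke (R P W : Type) where
  rel : R → W → W → Prop
  val : W → P → Prop

/-- Interpretation of actions as accessibility relations. -/
def actRel {R P W : Type} (M : Kripke R P W) : Act R → W → W → Prop
  | .rel r => M.rel r
  | .union a b => fun w v => actRel M a w v ∨ actRel M b w v
  | .comp a b => fun w v => ∃ u, actRel M a w u ∧ actRel M b u v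
  | .star a => Relation.ReflTransGen (actRel M a)

/-- Sentences of hybrid-dynamic propositional logic, indexed by the type `N` of
nominals (including variables); binders extend the nominal type by `Option`. -/
inductive Sen (R P : Type) : Type → Type 1
  | prop {N : Type} : P → Sen R P N
  | nom {N : Type} : N → Sen R P N
  | conj {N : Type} (n : ℕ) : (Fin n → Sen R P N) → Sen R P N
  | neg {N : Type} : Sen R P N → Sen R P N
  | pos {N : Type} : Act R → Sen R P N → Sen R P N
  | at_ {N : Type} : N → Sen R P N → Sen R P N
  | store {N : Type} : Sen R P (Option N) → Sen R P N
  | ex {N : Type} : Sen R P (Option N) → Sen R P N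

/-- Extend a nominal interpretation by interpreting the fresh variable as `w`. -/
def extOpt {N W : Type} (g : N → W) (w : W) : Option N → W :=
  fun o => o.elim w g

/-- Local satisfaction. -/
def sat {R P W : Type} (M : Kripke R P W) : {N : Type} → (N → W) → W → Sen R P N → Prop
  | _, g, w, .prop p => M.val w p
  | _, g, w, .nom k => w = g k
  | _, g, w, .conj _ f => ∀ i, sat M g w (f i)
  | _, g, w, .neg φ => ¬ sat M g w φ
  | _, g, w, .pos a φ => ∃ v, actRel M a w v ∧ sat M g v φ
  | _, g, w, .at_ k φ => sat M g (g k) φ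
  | _, g, w, .store φ => sat M (extOpt g w) w φ
  | _, g, w, .ex φ => ∃ u, sat M (extOpt g u) w φ

/-- The set of admitted sentence constructors `O ⊆ {◇, @, ↓, ∃}`. -/
structure Ops where
  dia : Bool
  at_ : Bool
  store : Bool
  ex : Bool

/-- An ω-bisimulation between the pointed-model settings `(M,g)` and `(K,h)`:
a family of ℓ-bisimulations relating sequences of named worlds together with a
current world, satisfying (prop), (nom), (wvar), (forth), (back), (atv), (atn),
(st), (ex-f) and (ex-b), according to the admitted operators `O`. -/
structure OmegaBisim {R P Nn W V : Type} (O : Ops)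
    (M : Kripke R P W) (K : Kripke R P V) (g : Nn → W) (h : Nn → V)
    (B : (ℓ : ℕ) → ((Fin ℓ → W) × W) → ((Fin ℓ → V) × V) → Prop) : Prop where
  prop : ∀ (ℓ : ℕ) (wb : Fin ℓ → W) (w : W) (vb : Fin ℓ → V) (v : V),
      B ℓ (wb, w) (vb, v) → ∀ p : P, M.val w p ↔ K.val v p
  nom : ∀ (ℓ : ℕ) (wb : Fin ℓ → W) (w : W) (vb : Fin ℓ → V) (v : V),
      B ℓ (wb, w) (vb, v) → ∀ k : Nn, w = g k ↔ v = h k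
  wvar : ∀ (ℓ : ℕ) (wb : Fin ℓ → W) (w : W) (vb : Fin ℓ → V) (v : V),
      B ℓ (wb, w) (vb, v) → ∀ j : Fin ℓ, wb j = w ↔ vb j = v
  forth : O.dia = true → ∀ (ℓ : ℕ) (wb : Fin ℓ → W) (w : W) (vb : Fin ℓ → V) (v : V),
      B ℓ (wb, w) (vb, v) → ∀ (a : Act R) (w' : W), actRel M a w w' →
        ∃ v' : V, actRel K a v v' ∧ B ℓ (wb, w') (vb, v')
  back : O.dia = true → ∀ (ℓ : ℕ) (wb : Fin ℓ → W) (w : W) (vb : Fin ℓ → V) (v : V),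
      B ℓ (wb, w) (vb, v) → ∀ (a : Act R) (v' : V), actRel K a v v' →
        ∃ w' : W, actRel M a w w' ∧ B ℓ (wb, w') (vb, v')
  atv : O.at_ = true → ∀ (ℓ : ℕ) (wb : Fin ℓ → W) (w : W) (vb : Fin ℓ → V) (v : V),
      B ℓ (wb, w) (vb, v) → ∀ j : Fin ℓ, B ℓ (wb, wb j) (vb, vb j)
  atn : O.at_ = true → ∀ (ℓ : ℕ) (wb : Fin ℓ → W) (w : W) (vb : Fin ℓ → V) (v : V),
      B ℓ (wb, w) (vb, v) → ∀ k : Nn, B ℓ (wb, g k) (vb, h k)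
  st : O.store = true → ∀ (ℓ : ℕ) (wb : Fin ℓ → W) (w : W) (vb : Fin ℓ → V) (v : V),
      B ℓ (wb, w) (vb, v) → B (ℓ + 1) (Fin.snoc wb w, w) (Fin.snoc vb v, v)
  exf : O.ex = true → ∀ (ℓ : ℕ) (wb : Fin ℓ → W) (w : W) (vb : Fin ℓ → V) (v : V),
      B ℓ (wb, w) (vb, v) → ∀ w' : W, ∃ v' : V,
        B (ℓ + 1) (Fin.snoc wb w', w) (Fin.snoc vb v', v)
  exb : O.ex = true → ∀ (ℓ : ℕ) (wb : Fin ℓ → W) (w : W) (vb : Fin ℓ → V) (v : V),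
      B ℓ (wb, w) (vb, v) → ∀ v' : V, ∃ w' : W,
        B (ℓ + 1) (Fin.snoc wb w', w) (Fin.snoc vb v', v)

/-- variable-shift lemma: if `B` is an ω-bisimulation between
`(M,g)` and `(K,h)` with `(μ, μ') B₁ (ν, ν')`, then `Bˣ`, defined by prefixing
the sequences with `μ`, resp. `ν`, is an ω-bisimulation between the expansions
`M[x↦μ]` and `N[x↦ν]` (with `x` a fresh nominal), and `μ' Bˣ₀ ν'`. -/
theorem omegaBisim_variable_shift {R P Nn W V : Type} {O : Ops}
    (M : Kripke R P W) (K : Kripke R P V) (g : Nn → W) (h : Nn → V)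
    (B : (ℓ : ℕ) → ((Fin ℓ → W) × W) → ((Fin ℓ → V) × V) → Prop)
    (hB : OmegaBisim O M K g h B)
    (μ μ' : W) (ν ν' : V)
    (h1 : B 1 (fun _ => μ, μ') (fun _ => ν, ν')) :
    OmegaBisim O M K (extOpt g μ) (extOpt h ν)
        (fun ℓ p q => B (ℓ + 1) (Fin.cons μ p.1, p.2) (Fin.cons ν q.1, q.2)) ∧
      B (0 + 1) (Fin.cons μ Fin.elim0, μ') (Fin.cons ν Fin.elim0, ν') := by
  constructor
  · constructor
    · intro ℓ wb w vb v hb p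
      exact hB.prop _ _ _ _ _ hb p
    · intro ℓ wb w vb v hb k
      cases k with
      | none =>
        have := hB.wvar _ _ _ _ _ hb 0
        simpa [extOpt, eq_comm] using this
      | some k => exact hB.nom _ _ _ _ _ hb k
    · intro ℓ wb w vb v hb j
      have := hB.wvar _ _ _ _ _ hb j.succ
      simpa using this
    · intro hd ℓ wb w vb v hb a w' hrel
      exact hB.forth hd _ _ _ _ _ hb a w' hrel
    · intro hd ℓ wb w vb v hb a v' hrel
      exact hB.back hd _ _ _ _ _ hb a v' hrel
    · intro ha ℓ wb w vb v hb j
      have := hB.atv ha _ _ _ _ _ hb j.succ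
      simpa using this
    · intro ha ℓ wb w vb v hb k
      cases k with
      | none =>
        have := hB.atv ha _ _ _ _ _ hb 0
        simpa [extOpt] using this
      | some k =>
        have := hB.atn ha _ _ _ _ _ hb k
        simpa [extOpt] using this
    · intro hs ℓ wb w vb v hb
      have := hB.st hs _ _ _ _ _ hb
      simpa [Fin.cons_snoc_eq_snoc_cons] using this
    · intro he ℓ wb w vb v hb w'
      obtain ⟨v', hv'⟩ := hB.exf he _ _ _ _ _ hb w'
      exact ⟨v', by simpa [Fin.cons_snoc_eq_snoc_cons] using hv'⟩
    · intro he ℓ wb w vb v hb v'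
      obtain ⟨w', hw'⟩ := hB.exb he _ _ _ _ _ hb v'
      exact ⟨w', by simpa [Fin.cons_snoc_eq_snoc_cons] using hw'⟩
  · have e1 : (Fin.cons μ Fin.elim0 : Fin 1 → W) = fun _ => μ := by
      funext j; fin_cases j; rfl
    have e2 : (Fin.cons ν Fin.elim0 : Fin 1 → V) = fun _ => ν := by
      funext j; fin_cases j; rfl
    rw [e1, e2]; exact h1
end

section
/- ω-bisimilarity coincides with countable EF-game equivalence: for pointed Kripke models (M,w) and (N,v) over the same signature, there exists an ω-bisimulation B between M and N with w B₀ v if and only if Eloise has a winning strategy in the Ehrenfeucht-Fraïssé game of length ω (played on the complete gameboard tree of height ω) starting from (M,w) and (N,v). -/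
/-- Eloise has a winning strategy in the EF game of length ω, played on the
complete gameboard tree of height ω determined by the admitted operators `O`
(greatest-fixed-point / invariant formulation: there is a family of positions,
containing the initial one, at which the game property holds and from which
every move of Abelard can be answered staying in the family). -/
def OmegaWin {R P Nn W V : Type} (O : Ops)
    (M : Kripke R P W) (K : Kripke R P V)
    (g0 : Nn → W) (w0 : W) (h0 : Nn → V) (v0 : V) : Prop :=
  ∃ Inv : (Nx : Type) → (Nx → W) → W → (Nx → V) → V → Prop,
    Inv Nn g0 w0 h0 v0 ∧
    ∀ (Nx : Type) (g : Nx → W) (w : W) (h : Nx → V) (v : V), Inv Nx g w h v →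
      ((∀ k : Nx, w = g k ↔ v = h k) ∧ (∀ p : P, M.val w p ↔ K.val v p)) ∧
      (O.dia = true → ∀ a : Act R,
        (∀ w', actRel M a w w' → ∃ v', actRel K a v v' ∧ Inv Nx g w' h v') ∧
        (∀ v', actRel K a v v' → ∃ w', actRel M a w w' ∧ Inv Nx g w' h v')) ∧
      (O.at_ = true → ∀ k : Nx, Inv Nx g (g k) h (h k)) ∧
      (O.store = true → Inv (Option Nx) (extOpt g w) w (extOpt h v) v) ∧
      (O.ex = true →
        (∀ w', ∃ v', Inv (Option Nx) (extOpt g w') w (extOpt h v') v) ∧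
        (∀ v', ∃ w', Inv (Option Nx) (extOpt g w') w (extOpt h v') v))


/-- Auxiliary: extend an index translation when the bisimulation side snocs a world. -/
def pullF {Nn Nx : Type} (ℓ : ℕ) (f : Nx → Nn ⊕ Fin ℓ) : Option Nx → Nn ⊕ Fin (ℓ + 1)
  | none => .inr (Fin.last ℓ)
  | some x => Sum.map id Fin.castSucc (f x)

lemma pullF_eq {Nn Nx W : Type} (ℓ : ℕ) (f : Nx → Nn ⊕ Fin ℓ)
    (g : Nn → W) (wb : Fin ℓ → W) (w'' : W) (g' : Nx → W)
    (hg : ∀ x, g' x = Sum.elim g wb (f x)) :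
    ∀ o, extOpt g' w'' o = Sum.elim g (Fin.snoc wb w'') (pullF ℓ f o) := by
  rintro (_ | x)
  · simp [pullF, extOpt]
  · have : extOpt g' w'' (some x) = g' x := rfl
    rw [this, hg x]
    cases hfx : f x <;> simp [pullF, hfx]

/-- Auxiliary: extend an index translation when the game side stores a world. -/
def pushF {Nn Nx : Type} (ℓ : ℕ) (f : Nn ⊕ Fin ℓ → Nx) : Nn ⊕ Fin (ℓ + 1) → Option Nx
  | .inl k => some (f (.inl k))
  | .inr j => Fin.lastCases none (fun j0 => some (f (.inr j0))) j

lemma pushF_eq {Nn Nx W : Type} (ℓ : ℕ) (f : Nn ⊕ Fin ℓ → Nx)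
    (g : Nn → W) (wb : Fin ℓ → W) (w'' : W) (g' : Nx → W)
    (hg : ∀ x, Sum.elim g wb x = g' (f x)) :
    ∀ x, Sum.elim g (Fin.snoc wb w'') x = extOpt g' w'' (pushF ℓ f x) := by
  rintro (k | j)
  · simpa [pushF, extOpt] using hg (Sum.inl k)
  · refine Fin.lastCases ?_ (fun j0 => ?_) j
    · simp [pushF, extOpt]
    · simpa [pushF, extOpt] using hg (Sum.inr j0)

/-- ω-bisimilarity coincides with countable EF-game equivalence:
there is an ω-bisimulation `B` with `w B₀ v` iff Eloise has a winning strategy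
in the EF game of length ω starting from `(M,w)` and `(N,v)`. -/
theorem omegaBisim_iff_omegaWin {R P Nn W V : Type} (O : Ops)
    (M : Kripke R P W) (K : Kripke R P V) (g : Nn → W) (h : Nn → V)
    (w : W) (v : V) :
    (∃ B : (ℓ : ℕ) → ((Fin ℓ → W) × W) → ((Fin ℓ → V) × V) → Prop,
        OmegaBisim O M K g h B ∧ B 0 (Fin.elim0, w) (Fin.elim0, v)) ↔
      OmegaWin O M K g w h v := by
  constructor
  · rintro ⟨B, hB, h0⟩
    refine ⟨fun Nx g' w' h' v' =>
      ∃ (ℓ : ℕ) (wb : Fin ℓ → W) (vb : Fin ℓ → V) (f : Nx → Nn ⊕ Fin ℓ),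
        (∀ x, g' x = Sum.elim g wb (f x)) ∧ (∀ x, h' x = Sum.elim h vb (f x)) ∧
        B ℓ (wb, w') (vb, v'), ?_, ?_⟩
    · exact ⟨0, Fin.elim0, Fin.elim0, Sum.inl, fun _ => rfl, fun _ => rfl, h0⟩
    · rintro Nx g' w' h' v' ⟨ℓ, wb, vb, f, hg, hh, hb⟩
      refine ⟨⟨?_, hB.prop ℓ wb w' vb v' hb⟩, ?_, ?_, ?_, ?_⟩
      · intro k
        rw [hg k, hh k]
        rcases f k with k0 | j
        · simpa using hB.nom ℓ wb w' vb v' hb k0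
        · simpa [eq_comm] using hB.wvar ℓ wb w' vb v' hb j
      · intro hd a
        constructor
        · intro w'' hw
          obtain ⟨v'', hv, hb'⟩ := hB.forth hd ℓ wb w' vb v' hb a w'' hw
          exact ⟨v'', hv, ℓ, wb, vb, f, hg, hh, hb'⟩
        · intro v'' hv
          obtain ⟨w'', hw, hb'⟩ := hB.back hd ℓ wb w' vb v' hb a v'' hv
          exact ⟨w'', hw, ℓ, wb, vb, f, hg, hh, hb'⟩
      · intro ha k
        refine ⟨ℓ, wb, vb, f, hg, hh, ?_⟩
        rw [hg k, hh k]
        rcases f k with k0 | j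
        · simpa using hB.atn ha ℓ wb w' vb v' hb k0
        · simpa using hB.atv ha ℓ wb w' vb v' hb j
      · intro hs
        exact ⟨ℓ + 1, Fin.snoc wb w', Fin.snoc vb v', pullF ℓ f,
          pullF_eq ℓ f g wb w' g' hg, pullF_eq ℓ f h vb v' h' hh,
          hB.st hs ℓ wb w' vb v' hb⟩
      · intro he
        constructor
        · intro w''
          obtain ⟨v'', hb'⟩ := hB.exf he ℓ wb w' vb v' hb w''
          exact ⟨v'', ℓ + 1, Fin.snoc wb w'', Fin.snoc vb v'', pullF ℓ f,
            pullF_eq ℓ f g wb w'' g' hg, pullF_eq ℓ f h vb v'' h' hh, hb'⟩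
        · intro v''
          obtain ⟨w'', hb'⟩ := hB.exb he ℓ wb w' vb v' hb v''
          exact ⟨w'', ℓ + 1, Fin.snoc wb w'', Fin.snoc vb v'', pullF ℓ f,
            pullF_eq ℓ f g wb w'' g' hg, pullF_eq ℓ f h vb v'' h' hh, hb'⟩
  · rintro ⟨Inv, h0, hstep⟩
    refine ⟨fun ℓ p q =>
      ∃ (Nx : Type) (g' : Nx → W) (h' : Nx → V) (f : Nn ⊕ Fin ℓ → Nx),
        (∀ x, Sum.elim g p.1 x = g' (f x)) ∧ (∀ x, Sum.elim h q.1 x = h' (f x)) ∧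
        Inv Nx g' p.2 h' q.2, ?_, ?_⟩
    constructor
    · intro ℓ wb w' vb v' ⟨Nx, g', h', f, hg, hh, hInv⟩
      exact (hstep Nx g' w' h' v' hInv).1.2
    · intro ℓ wb w' vb v' ⟨Nx, g', h', f, hg, hh, hInv⟩ k
      have := (hstep Nx g' w' h' v' hInv).1.1 (f (Sum.inl k))
      rwa [← hg (Sum.inl k), ← hh (Sum.inl k)] at this
    · intro ℓ wb w' vb v' ⟨Nx, g', h', f, hg, hh, hInv⟩ j
      have := (hstep Nx g' w' h' v' hInv).1.1 (f (Sum.inr j))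
      rw [← hg (Sum.inr j), ← hh (Sum.inr j)] at this
      simpa [eq_comm] using this
    · intro hd ℓ wb w' vb v' ⟨Nx, g', h', f, hg, hh, hInv⟩ a w'' hw
      obtain ⟨v'', hv, hInv'⟩ := ((hstep Nx g' w' h' v' hInv).2.1 hd a).1 w'' hw
      exact ⟨v'', hv, Nx, g', h', f, hg, hh, hInv'⟩
    · intro hd ℓ wb w' vb v' ⟨Nx, g', h', f, hg, hh, hInv⟩ a v'' hv
      obtain ⟨w'', hw, hInv'⟩ := ((hstep Nx g' w' h' v' hInv).2.1 hd a).2 v'' hv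
      exact ⟨w'', hw, Nx, g', h', f, hg, hh, hInv'⟩
    · intro ha ℓ wb w' vb v' ⟨Nx, g', h', f, hg, hh, hInv⟩ j
      refine ⟨Nx, g', h', f, hg, hh, ?_⟩
      have := (hstep Nx g' w' h' v' hInv).2.2.1 ha (f (Sum.inr j))
      rwa [← hg (Sum.inr j), ← hh (Sum.inr j)] at this
    · intro ha ℓ wb w' vb v' ⟨Nx, g', h', f, hg, hh, hInv⟩ k
      refine ⟨Nx, g', h', f, hg, hh, ?_⟩
      have := (hstep Nx g' w' h' v' hInv).2.2.1 ha (f (Sum.inl k))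
      rwa [← hg (Sum.inl k), ← hh (Sum.inl k)] at this
    · intro hs ℓ wb w' vb v' ⟨Nx, g', h', f, hg, hh, hInv⟩
      exact ⟨Option Nx, extOpt g' w', extOpt h' v', pushF ℓ f,
        pushF_eq ℓ f g wb w' g' hg, pushF_eq ℓ f h vb v' h' hh,
        (hstep Nx g' w' h' v' hInv).2.2.2.1 hs⟩
    · intro he ℓ wb w' vb v' ⟨Nx, g', h', f, hg, hh, hInv⟩ w''
      obtain ⟨v'', hInv'⟩ := ((hstep Nx g' w' h' v' hInv).2.2.2.2 he).1 w''
      exact ⟨v'', Option Nx, extOpt g' w'', extOpt h' v'', pushF ℓ f,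
        pushF_eq ℓ f g wb w'' g' hg, pushF_eq ℓ f h vb v'' h' hh, hInv'⟩
    · intro he ℓ wb w' vb v' ⟨Nx, g', h', f, hg, hh, hInv⟩ v''
      obtain ⟨w'', hInv'⟩ := ((hstep Nx g' w' h' v' hInv).2.2.2.2 he).2 v''
      exact ⟨w'', Option Nx, extOpt g' w'', extOpt h' v'', pushF ℓ f,
        pushF_eq ℓ f g wb w'' g' hg, pushF_eq ℓ f h vb v'' h' hh, hInv'⟩
    · refine ⟨Nn, g, h, Sum.elim id (fun j => j.elim0), ?_, ?_, h0⟩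
      · rintro (k | j)
        · rfl
        · exact j.elim0
      · rintro (k | j)
        · rfl
        · exact j.elim0
end

section
/- If the fragment L is closed under possibility (◇ ∈ O), then every basic partial isomorphism h belonging to a back-and-forth system I between Kripke structures M and N is a partial isomorphism: for all binary relation symbols λ and all w₁, w₂ ∈ dom(h), w₁ λ^M w₂ if and only if h(w₁) λ^N h(w₂). -/
/-- A basic partial isomorphism: a bijection between a subset of `|M|` and a
subset of `|N|` preserving and reflecting basic sentences (nominals and
propositional symbols). -/
def IsBPI {R P Nn W V : Type} (M : Kripke R P W) (K : Kripke R P V)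
    (g : Nn → W) (h : Nn → V) (e : PartialEquiv W V) : Prop :=
  ∀ w ∈ e.source, (∀ p : P, M.val w p ↔ K.val (e w) p) ∧
    (∀ k : Nn, w = g k ↔ e w = h k)

/-- `f` extends the basic partial isomorphism `e`. -/
def ExtendsBPI {W V : Type} (e f : PartialEquiv W V) : Prop :=
  e.source ⊆ f.source ∧ ∀ w ∈ e.source, f w = e w

/-- A back-and-forth system between `M` and `N`: a nonempty family of basic
partial isomorphisms with the extension properties determined by the admitted
operators `O`. -/
structure IsBAF {R P Nn W V : Type} (O : Ops)
    (M : Kripke R P W) (K : Kripke R P V) (g : Nn → W) (h : Nn → V)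
    (I : Set (PartialEquiv W V)) : Prop where
  nonempty : I.Nonempty
  bpi : ∀ e ∈ I, IsBPI M K g h e
  atExt : O.at_ = true → ∀ e ∈ I, ∀ k : Nn,
      ∃ f ∈ I, ExtendsBPI e f ∧ g k ∈ f.source
  diaForth : O.dia = true → ∀ e ∈ I, ∀ (a : Act R), ∀ w₁ ∈ e.source, ∀ w₂ : W,
      actRel M a w₁ w₂ →
      ∃ f ∈ I, ExtendsBPI e f ∧ w₂ ∈ f.source ∧ actRel K a (f w₁) (f w₂)
  diaBack : O.dia = true → ∀ e ∈ I, ∀ (a : Act R), ∀ v₁ ∈ e.target, ∀ v₂ : V,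
      actRel K a v₁ v₂ →
      ∃ f ∈ I, ExtendsBPI e f ∧ v₂ ∈ f.target ∧ actRel M a (f.symm v₁) (f.symm v₂)
  exForth : O.ex = true → ∀ e ∈ I, ∀ w : W, ∃ f ∈ I, ExtendsBPI e f ∧ w ∈ f.source
  exBack : O.ex = true → ∀ e ∈ I, ∀ v : V, ∃ f ∈ I, ExtendsBPI e f ∧ v ∈ f.target

/-- if the fragment is closed under possibility, then every basic
partial isomorphism belonging to a back-and-forth system is a partial
isomorphism: it preserves and reflects all accessibility relations. -/
theorem bpi_in_baf_is_partial_iso {R P Nn W V : Type} {O : Ops}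
    (hdia : O.dia = true)
    (M : Kripke R P W) (K : Kripke R P V) (g : Nn → W) (h : Nn → V)
    (I : Set (PartialEquiv W V)) (hI : IsBAF O M K g h I)
    (e : PartialEquiv W V) (he : e ∈ I) :
    ∀ (r : R), ∀ w₁ ∈ e.source, ∀ w₂ ∈ e.source,
      (M.rel r w₁ w₂ ↔ K.rel r (e w₁) (e w₂)) := by
  intro r w₁ hw₁ w₂ hw₂
  constructor
  · intro hrel
    obtain ⟨f, hfI, ⟨hsub, heq⟩, hw₂f, hK⟩ :=
      hI.diaForth hdia e he (.rel r) w₁ hw₁ w₂ hrel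
    rw [heq w₁ hw₁, heq w₂ hw₂] at hK
    exact hK
  · intro hrel
    obtain ⟨f, hfI, ⟨hsub, heq⟩, hv₂f, hM⟩ :=
      hI.diaBack hdia e he (.rel r) (e w₁) (e.map_source hw₁) (e w₂) hrel
    have h1 : f.symm (e w₁) = w₁ := by
      rw [← heq w₁ hw₁]; exact f.left_inv (hsub hw₁)
    have h2 : f.symm (e w₂) = w₂ := by
      rw [← heq w₂ hw₂]; exact f.left_inv (hsub hw₂)
    rw [h1, h2] at hM
    exact hM
end

section
/- Back-and-forth implies ω-game equivalence: if there exists a back-and-forth system I between Kripke structures M and N with h(w) = v for some h ∈ I, then Eloise has a winning strategy in the Ehrenfeucht-Fraïssé game of length ω starting from (M,w) and (N,v). -/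
/-- back-and-forth equivalence implies ω-game equivalence: if a
back-and-forth system between `M` and `N` contains a basic partial isomorphism
sending `w` to `v`, then Eloise wins the EF game of length ω from `(M,w)`,`(N,v)`. -/
theorem baf_implies_omegaWin {R P Nn W V : Type} {O : Ops}
    (M : Kripke R P W) (K : Kripke R P V) (g : Nn → W) (h : Nn → V)
    (I : Set (PartialEquiv W V)) (hI : IsBAF O M K g h I)
    (e : PartialEquiv W V) (he : e ∈ I)
    (w : W) (v : V) (hw : w ∈ e.source) (hv : e w = v) :
    OmegaWin O M K g w h v := by
  classical
  refine ⟨fun Nx g' w' h' v' =>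
    ∃ f ∈ I, w' ∈ f.source ∧ f w' = v' ∧
      ∀ x : Nx, (g' x ∈ f.source ∧ f (g' x) = h' x) ∨
        (∃ k : Nn, g' x = g k ∧ h' x = h k), ?_, ?_⟩
  · exact ⟨e, he, hw, hv, fun k => Or.inr ⟨k, rfl, rfl⟩⟩
  · rintro Nx g' w' h' v' ⟨f, hf, hws, hfv, hnom⟩
    have compat : ∀ (f' : PartialEquiv W V), f' ∈ I →
        (∀ x : Nx, (g' x ∈ f'.source ∧ f' (g' x) = h' x) ∨
          (∃ k : Nn, g' x = g k ∧ h' x = h k)) →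
        ∀ w'' ∈ f'.source, ∀ x : Nx, w'' = g' x ↔ f' w'' = h' x := by
      intro f' hf' hnom' w'' hw'' x
      rcases hnom' x with ⟨hgs, hge⟩ | ⟨k, hgk, hhk⟩
      · constructor
        · rintro rfl; exact hge
        · intro hh; exact f'.injOn hw'' hgs (hh.trans hge.symm)
      · rw [hgk, hhk]; exact ((hI.bpi f' hf' w'' hw'').2 k)
    have extnom : ∀ (f' : PartialEquiv W V), ExtendsBPI f f' →
        ∀ x : Nx, (g' x ∈ f'.source ∧ f' (g' x) = h' x) ∨
          (∃ k : Nn, g' x = g k ∧ h' x = h k) := by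
      intro f' ⟨hsub, heq⟩ x
      rcases hnom x with ⟨hgs, hge⟩ | h2
      · exact Or.inl ⟨hsub hgs, (heq _ hgs).trans hge⟩
      · exact Or.inr h2
    refine ⟨⟨fun k => by rw [← hfv]; exact compat f hf hnom w' hws k,
        fun p => by rw [← hfv]; exact (hI.bpi f hf w' hws).1 p⟩, ?_, ?_, ?_, ?_⟩
    · -- dia
      intro hd a
      constructor
      · intro w₂ hstep
        obtain ⟨f', hf', hext, hw₂, hrel⟩ := hI.diaForth hd f hf a w' hws w₂ hstep
        refine ⟨f' w₂, ?_, f', hf', hw₂, rfl, extnom f' hext⟩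
        rwa [hext.2 w' hws, hfv] at hrel
      · intro v₂ hstep
        have hvt : v' ∈ f.target := hfv ▸ f.map_source hws
        obtain ⟨f', hf', hext, hv₂, hrel⟩ := hI.diaBack hd f hf a v' hvt v₂ hstep
        have hw's : w' ∈ f'.source := hext.1 hws
        have hfw' : f' w' = v' := (hext.2 w' hws).trans hfv
        have hsv' : f'.symm v' = w' := by rw [← hfw', f'.left_inv hw's]
        refine ⟨f'.symm v₂, ?_, f', hf', f'.map_target hv₂, f'.right_inv hv₂,
          extnom f' hext⟩
        rwa [hsv'] at hrel
    · -- at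
      intro hat x
      rcases hnom x with ⟨hgs, hge⟩ | ⟨k, hgk, hhk⟩
      · exact ⟨f, hf, hgs, hge, hnom⟩
      · obtain ⟨f', hf', hext, hks⟩ := hI.atExt hat f hf k
        have : f' (g k) = h k := ((hI.bpi f' hf' _ hks).2 k).mp rfl
        exact ⟨f', hf', hgk ▸ hks, by rw [hgk, hhk, this], extnom f' hext⟩
    · -- store
      intro _
      refine ⟨f, hf, hws, hfv, ?_⟩
      rintro (_ | x)
      · exact Or.inl ⟨hws, hfv⟩
      · exact hnom x
    · -- ex
      intro hex
      constructor
      · intro w₂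
        obtain ⟨f', hf', hext, hw₂⟩ := hI.exForth hex f hf w₂
        refine ⟨f' w₂, f', hf', hext.1 hws, (hext.2 w' hws).trans hfv, ?_⟩
        rintro (_ | x)
        · exact Or.inl ⟨hw₂, rfl⟩
        · exact extnom f' hext x
      · intro v₂
        obtain ⟨f', hf', hext, hv₂⟩ := hI.exBack hex f hf v₂
        refine ⟨f'.symm v₂, f', hf', hext.1 hws, (hext.2 w' hws).trans hfv, ?_⟩
        rintro (_ | x)
        · exact Or.inl ⟨f'.map_target hv₂, f'.right_inv hv₂⟩
        · exact extnom f' hext x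
end

section
/- ω-game equivalence implies back-and-forth equivalence under closure conditions: assume ↓ ∈ O, and moreover @ ∈ O whenever ◇ ∈ O or ∃ ∈ O. If Eloise has a winning strategy in the Ehrenfeucht-Fraïssé game of length ω starting from pointed models (M,w) and (N,v), then there exists a back-and-forth system I between M and N with h(w) = v for some h ∈ I. -/
attribute [local instance] Classical.propDecidable

/-- The partial equivalence determined by a pair of nominal assignments whose
graphs match. -/
noncomputable def mkPE {Nx W V : Type} (g' : Nx → W) (h' : Nx → V) (w0 : W) (v0 : V)
    (m : ∀ k j, g' k = g' j ↔ h' k = h' j) : PartialEquiv W V where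
  toFun x := if hx : ∃ k, g' k = x then h' hx.choose else v0
  invFun y := if hy : ∃ k, h' k = y then g' hy.choose else w0
  source := Set.range g'
  target := Set.range h'
  map_source' := by rintro x ⟨k, rfl⟩; rw [dif_pos ⟨k, rfl⟩]; exact ⟨_, rfl⟩
  map_target' := by rintro y ⟨k, rfl⟩; rw [dif_pos ⟨k, rfl⟩]; exact ⟨_, rfl⟩
  left_inv' := by
    rintro x ⟨k, rfl⟩
    have hx : ∃ j, g' j = g' k := ⟨k, rfl⟩
    rw [dif_pos hx]
    have hy : ∃ j, h' j = h' hx.choose := ⟨hx.choose, rfl⟩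
    rw [dif_pos hy]
    rw [(m _ _).mpr hy.choose_spec, hx.choose_spec]
  right_inv' := by
    rintro y ⟨k, rfl⟩
    have hy : ∃ j, h' j = h' k := ⟨k, rfl⟩
    rw [dif_pos hy]
    have hx : ∃ j, g' j = g' hy.choose := ⟨hy.choose, rfl⟩
    rw [dif_pos hx]
    rw [(m _ _).mp hx.choose_spec, hy.choose_spec]

theorem mkPE_apply {Nx W V : Type} (g' : Nx → W) (h' : Nx → V) (w0 : W) (v0 : V)
    (m : ∀ k j, g' k = g' j ↔ h' k = h' j) (k : Nx) :
    mkPE g' h' w0 v0 m (g' k) = h' k := by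
  show (if hx : ∃ j, g' j = g' k then h' hx.choose else v0) = h' k
  rw [dif_pos ⟨k, rfl⟩]
  exact (m _ _).mp (⟨k, rfl⟩ : ∃ j, g' j = g' k).choose_spec

theorem mkPE_symm_apply {Nx W V : Type} (g' : Nx → W) (h' : Nx → V) (w0 : W) (v0 : V)
    (m : ∀ k j, g' k = g' j ↔ h' k = h' j) (k : Nx) :
    (mkPE g' h' w0 v0 m).symm (h' k) = g' k := by
  show (if hy : ∃ j, h' j = h' k then g' hy.choose else w0) = g' k
  rw [dif_pos ⟨k, rfl⟩]
  exact (m _ _).mpr (⟨k, rfl⟩ : ∃ j, h' j = h' k).choose_spec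

theorem mkPE_source {Nx W V : Type} (g' : Nx → W) (h' : Nx → V) (w0 : W) (v0 : V)
    (m : ∀ k j, g' k = g' j ↔ h' k = h' j) :
    (mkPE g' h' w0 v0 m).source = Set.range g' := rfl

theorem mkPE_target {Nx W V : Type} (g' : Nx → W) (h' : Nx → V) (w0 : W) (v0 : V)
    (m : ∀ k j, g' k = g' j ↔ h' k = h' j) :
    (mkPE g' h' w0 v0 m).target = Set.range h' := rfl

/-- ω-game equivalence implies back-and-forth equivalence,
assuming `↓ ∈ O`, and `@ ∈ O` whenever `◇ ∈ O` or `∃ ∈ O`. -/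
theorem omegaWin_implies_baf {R P Nn W V : Type} {O : Ops}
    (hstore : O.store = true)
    (hda : O.dia = true → O.at_ = true)
    (hea : O.ex = true → O.at_ = true)
    (M : Kripke R P W) (K : Kripke R P V) (g : Nn → W) (h : Nn → V)
    (w : W) (v : V) (hwin : OmegaWin O M K g w h v) :
    ∃ (I : Set (PartialEquiv W V)) (e : PartialEquiv W V),
      IsBAF O M K g h I ∧ e ∈ I ∧ w ∈ e.source ∧ e w = v := by
  obtain ⟨Inv, hInv0, hstep⟩ := hwin
  by_cases hat : O.at_ = true
  · -- main case: @ ∈ O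
    have hmatch : ∀ {Nx : Type} {g' : Nx → W} {w' : W} {h' : Nx → V} {v' : V},
        Inv Nx g' w' h' v' → ∀ k j, g' k = g' j ↔ h' k = h' j := by
      intro Nx g' w' h' v' hi k j
      have h1 := (hstep _ _ _ _ _ hi).2.2.1 hat k
      exact (hstep _ _ _ _ _ h1).1.1 j
    -- the family of partial isomorphisms arising from positions of the game
    set I : Set (PartialEquiv W V) :=
      { e | ∃ (Nx : Type) (g' : Nx → W) (h' : Nx → V) (ι : Nn → Nx) (w' : W) (v' : V)
            (hi : Inv Nx g' w' h' v'),
            (∀ k, g' (ι k) = g k) ∧ (∀ k, h' (ι k) = h k) ∧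
            e = mkPE g' h' w v (hmatch hi) } with hI
    -- the initial partial isomorphism: store the initial points
    have h2 : Inv (Option Nn) (extOpt g w) w (extOpt h v) v :=
      (hstep _ _ _ _ _ hInv0).2.2.2.1 hstore
    refine ⟨I, mkPE (extOpt g w) (extOpt h v) w v (hmatch h2), ?_, ?_, ?_, ?_⟩
    · constructor
      · -- nonempty
        exact ⟨mkPE (extOpt g w) (extOpt h v) w v (hmatch h2),
          Option Nn, extOpt g w, extOpt h v, some, w, v, h2,
          fun k => rfl, fun k => rfl, rfl⟩
      · -- bpi
        rintro e ⟨Nx, g', h', ι, w', v', hi, hg, hh, rfl⟩ w₁ hw₁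
        obtain ⟨k, rfl⟩ := hw₁
        rw [mkPE_apply]
        have h1 := (hstep _ _ _ _ _ hi).2.2.1 hat k
        have hb := (hstep _ _ _ _ _ h1).1
        refine ⟨hb.2, fun k0 => ?_⟩
        rw [← hg k0, ← hh k0]
        exact hb.1 (ι k0)
      · -- atExt
        rintro _ e ⟨Nx, g', h', ι, w', v', hi, hg, hh, rfl⟩ k
        exact ⟨_, ⟨Nx, g', h', ι, w', v', hi, hg, hh, rfl⟩,
          ⟨subset_rfl, fun _ _ => rfl⟩, ⟨ι k, hg k⟩⟩
      · -- diaForth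
        rintro hdia e ⟨Nx, g', h', ι, w', v', hi, hg, hh, rfl⟩ a w₁ hw₁ w₂ hrel
        obtain ⟨k, rfl⟩ := hw₁
        have h1 := (hstep _ _ _ _ _ hi).2.2.1 hat k
        obtain ⟨v₂, hrel', h3⟩ := ((hstep _ _ _ _ _ h1).2.1 hdia a).1 w₂ hrel
        have h4 : Inv (Option Nx) (extOpt g' w₂) w₂ (extOpt h' v₂) v₂ :=
          (hstep _ _ _ _ _ h3).2.2.2.1 hstore
        refine ⟨mkPE (extOpt g' w₂) (extOpt h' v₂) w v (hmatch h4),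
          ⟨Option Nx, extOpt g' w₂, extOpt h' v₂, fun k => some (ι k), w₂, v₂, h4,
            fun k => hg k, fun k => hh k, rfl⟩, ⟨?_, ?_⟩, ⟨none, rfl⟩, ?_⟩
        · rintro x ⟨j, rfl⟩; exact ⟨some j, rfl⟩
        · rintro x ⟨j, rfl⟩
          rw [mkPE_apply]
          exact mkPE_apply (extOpt g' w₂) (extOpt h' v₂) w v (hmatch h4) (some j)
        · have e1 : mkPE (extOpt g' w₂) (extOpt h' v₂) w v (hmatch h4) (g' k) = h' k :=
            mkPE_apply (extOpt g' w₂) (extOpt h' v₂) w v (hmatch h4) (some k)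
          have e2 : mkPE (extOpt g' w₂) (extOpt h' v₂) w v (hmatch h4) w₂ = v₂ :=
            mkPE_apply (extOpt g' w₂) (extOpt h' v₂) w v (hmatch h4) none
          rw [e1, e2]; exact hrel'
      · -- diaBack
        rintro hdia e ⟨Nx, g', h', ι, w', v', hi, hg, hh, rfl⟩ a v₁ hv₁ v₂ hrel
        obtain ⟨k, rfl⟩ := hv₁
        have h1 := (hstep _ _ _ _ _ hi).2.2.1 hat k
        obtain ⟨w₂, hrel', h3⟩ := ((hstep _ _ _ _ _ h1).2.1 hdia a).2 v₂ hrel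
        have h4 : Inv (Option Nx) (extOpt g' w₂) w₂ (extOpt h' v₂) v₂ :=
          (hstep _ _ _ _ _ h3).2.2.2.1 hstore
        refine ⟨mkPE (extOpt g' w₂) (extOpt h' v₂) w v (hmatch h4),
          ⟨Option Nx, extOpt g' w₂, extOpt h' v₂, fun k => some (ι k), w₂, v₂, h4,
            fun k => hg k, fun k => hh k, rfl⟩, ⟨?_, ?_⟩, ⟨none, rfl⟩, ?_⟩
        · rintro x ⟨j, rfl⟩; exact ⟨some j, rfl⟩
        · rintro x ⟨j, rfl⟩
          rw [mkPE_apply]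
          exact mkPE_apply (extOpt g' w₂) (extOpt h' v₂) w v (hmatch h4) (some j)
        · have e1 : (mkPE (extOpt g' w₂) (extOpt h' v₂) w v (hmatch h4)).symm (h' k) = g' k :=
            mkPE_symm_apply (extOpt g' w₂) (extOpt h' v₂) w v (hmatch h4) (some k)
          have e2 : (mkPE (extOpt g' w₂) (extOpt h' v₂) w v (hmatch h4)).symm v₂ = w₂ :=
            mkPE_symm_apply (extOpt g' w₂) (extOpt h' v₂) w v (hmatch h4) none
          rw [e1, e2]; exact hrel'
      · -- exForth
        rintro hex e ⟨Nx, g', h', ι, w', v', hi, hg, hh, rfl⟩ w₁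
        obtain ⟨v₁, h3⟩ := ((hstep _ _ _ _ _ hi).2.2.2.2 hex).1 w₁
        refine ⟨mkPE (extOpt g' w₁) (extOpt h' v₁) w v (hmatch h3),
          ⟨Option Nx, extOpt g' w₁, extOpt h' v₁, fun k => some (ι k), w', v', h3,
            fun k => hg k, fun k => hh k, rfl⟩, ⟨?_, ?_⟩, ⟨none, rfl⟩⟩
        · rintro x ⟨j, rfl⟩; exact ⟨some j, rfl⟩
        · rintro x ⟨j, rfl⟩
          rw [mkPE_apply]
          exact mkPE_apply (extOpt g' w₁) (extOpt h' v₁) w v (hmatch h3) (some j)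
      · -- exBack
        rintro hex e ⟨Nx, g', h', ι, w', v', hi, hg, hh, rfl⟩ v₁
        obtain ⟨w₁, h3⟩ := ((hstep _ _ _ _ _ hi).2.2.2.2 hex).2 v₁
        refine ⟨mkPE (extOpt g' w₁) (extOpt h' v₁) w v (hmatch h3),
          ⟨Option Nx, extOpt g' w₁, extOpt h' v₁, fun k => some (ι k), w', v', h3,
            fun k => hg k, fun k => hh k, rfl⟩, ⟨?_, ?_⟩, ⟨none, rfl⟩⟩
        · rintro x ⟨j, rfl⟩; exact ⟨some j, rfl⟩
        · rintro x ⟨j, rfl⟩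
          rw [mkPE_apply]
          exact mkPE_apply (extOpt g' w₁) (extOpt h' v₁) w v (hmatch h3) (some j)
    · exact ⟨Option Nn, extOpt g w, extOpt h v, some, w, v, h2,
        fun k => rfl, fun k => rfl, rfl⟩
    · exact ⟨none, rfl⟩
    · exact mkPE_apply (extOpt g w) (extOpt h v) w v (hmatch h2) none
  · -- degenerate case: @ ∉ O, hence ◇ ∉ O and ∃ ∉ O
    have hat' : O.at_ = false := by cases hO : O.at_ <;> simp_all
    have hdia : O.dia = false := by
      cases hO : O.dia
      · rfl
      · exact absurd (hda hO) (by simp [hat'])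
    have hex : O.ex = false := by
      cases hO : O.ex
      · rfl
      · exact absurd (hea hO) (by simp [hat'])
    set e0 : PartialEquiv W V :=
      { toFun := fun _ => v
        invFun := fun _ => w
        source := {w}
        target := {v}
        map_source' := by intro x _; rfl
        map_target' := by intro y _; rfl
        left_inv' := by rintro x hx; exact hx.symm
        right_inv' := by rintro y hy; exact hy.symm } with he0
    refine ⟨{e0}, e0, ?_, rfl, rfl, rfl⟩
    have hb := (hstep _ _ _ _ _ hInv0).1
    constructor
    · exact ⟨e0, rfl⟩
    · rintro e rfl w₁ hw₁
      have : w₁ = w := hw₁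
      subst this
      exact ⟨hb.2, fun k => hb.1 k⟩
    · intro hO; simp [hat'] at hO
    · intro hO; simp [hdia] at hO
    · intro hO; simp [hdia] at hO
    · intro hO; simp [hex] at hO
    · intro hO; simp [hex] at hO
end

section
/- Hennessy-Milner-type theorem for image-finite models: in the quantifier-free fragment of hybrid propositional logic closed under possibility (◇ ∈ O, no ∃ and no action constructors), two image-finite pointed Kripke models (M,w) and (N,v) over the same signature are elementarily equivalent if and only if Eloise has a winning strategy in the Ehrenfeucht-Fraïssé game of length ω starting from (M,w) and (N,v). -/
/-- Sentences of the quantifier-free fragment of hybrid propositional logic: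
nominals, propositional symbols, Boolean connectives, possibility `⟨λ⟩` over
relation symbols, retrieve `@` and store `↓` (no `∃`, no action constructors). -/
inductive SenQF (R P : Type) : Type → Type 1
  | prop {N : Type} : P → SenQF R P N
  | nom {N : Type} : N → SenQF R P N
  | conj {N : Type} (n : ℕ) : (Fin n → SenQF R P N) → SenQF R P N
  | neg {N : Type} : SenQF R P N → SenQF R P N
  | pos {N : Type} : R → SenQF R P N → SenQF R P N
  | at_ {N : Type} : N → SenQF R P N → SenQF R P N
  | store {N : Type} : SenQF R P (Option N) → SenQF R P N

/-- Local satisfaction for the quantifier-free fragment. -/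
def satQF {R P W : Type} (M : Kripke R P W) : {N : Type} → (N → W) → W → SenQF R P N → Prop
  | _, g, w, .prop p => M.val w p
  | _, g, w, .nom k => w = g k
  | _, g, w, .conj _ f => ∀ i, satQF M g w (f i)
  | _, g, w, .neg φ => ¬ satQF M g w φ
  | _, g, w, .pos r φ => ∃ v, M.rel r w v ∧ satQF M g v φ
  | _, g, w, .at_ k φ => satQF M g (g k) φ
  | _, g, w, .store φ => satQF M (extOpt g w) w φ

/-- A Kripke structure is image-finite if every world has finitely many direct
successors under every relation symbol. -/
def ImageFinite {R P W : Type} (M : Kripke R P W) : Prop :=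
  ∀ (r : R) (w : W), Set.Finite {w' | M.rel r w w'}

/-- Eloise wins the EF game of length ω for the fragment `{◇, @, ↓}` (played on
the complete gameboard tree of height ω; invariant formulation). -/
def OmegaWinQF {R P Nn W V : Type} (M : Kripke R P W) (K : Kripke R P V)
    (g0 : Nn → W) (w0 : W) (h0 : Nn → V) (v0 : V) : Prop :=
  ∃ Inv : (Nx : Type) → (Nx → W) → W → (Nx → V) → V → Prop,
    Inv Nn g0 w0 h0 v0 ∧
    ∀ (Nx : Type) (g : Nx → W) (w : W) (h : Nx → V) (v : V), Inv Nx g w h v →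
      ((∀ k : Nx, w = g k ↔ v = h k) ∧ (∀ p : P, M.val w p ↔ K.val v p)) ∧
      (∀ r : R,
        (∀ w', M.rel r w w' → ∃ v', K.rel r v v' ∧ Inv Nx g w' h v') ∧
        (∀ v', K.rel r v v' → ∃ w', M.rel r w w' ∧ Inv Nx g w' h v')) ∧
      (∀ k : Nx, Inv Nx g (g k) h (h k)) ∧
      Inv (Option Nx) (extOpt g w) w (extOpt h v) v

theorem sat_of_inv {R P W V : Type} (M : Kripke R P W) (K : Kripke R P V)
    (Inv : (Nx : Type) → (Nx → W) → W → (Nx → V) → V → Prop)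
    (hcl : ∀ (Nx : Type) (g : Nx → W) (w : W) (h : Nx → V) (v : V), Inv Nx g w h v →
      ((∀ k : Nx, w = g k ↔ v = h k) ∧ (∀ p : P, M.val w p ↔ K.val v p)) ∧
      (∀ r : R,
        (∀ w', M.rel r w w' → ∃ v', K.rel r v v' ∧ Inv Nx g w' h v') ∧
        (∀ v', K.rel r v v' → ∃ w', M.rel r w w' ∧ Inv Nx g w' h v')) ∧
      (∀ k : Nx, Inv Nx g (g k) h (h k)) ∧
      Inv (Option Nx) (extOpt g w) w (extOpt h v) v) :
    ∀ {Nx : Type} (φ : SenQF R P Nx) (g : Nx → W) (w : W) (h : Nx → V) (v : V),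
      Inv Nx g w h v → (satQF M g w φ ↔ satQF K h v φ) := by
  intro Nx φ
  induction φ with
  | prop p => exact fun g w h v hi => (hcl _ g w h v hi).1.2 p
  | nom k => exact fun g w h v hi => (hcl _ g w h v hi).1.1 k
  | conj n f ih =>
      intro g w h v hi
      exact forall_congr' fun i => ih i g w h v hi
  | neg φ ih =>
      intro g w h v hi
      exact not_congr (ih g w h v hi)
  | pos r φ ih =>
      intro g w h v hi
      constructor
      · rintro ⟨w', hw', hs⟩
        obtain ⟨v', hv', hinv⟩ := ((hcl _ g w h v hi).2.1 r).1 w' hw'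
        exact ⟨v', hv', (ih g w' h v' hinv).mp hs⟩
      · rintro ⟨v', hv', hs⟩
        obtain ⟨w', hw', hinv⟩ := ((hcl _ g w h v hi).2.1 r).2 v' hv'
        exact ⟨w', hw', (ih g w' h v' hinv).mpr hs⟩
  | at_ k φ ih =>
      intro g w h v hi
      exact ih g (g k) h (h k) ((hcl _ g w h v hi).2.2.1 k)
  | store φ ih =>
      intro g w h v hi
      exact ih (extOpt g w) w (extOpt h v) v ((hcl _ g w h v hi).2.2.2)

theorem hm_forth {R P W V Nx : Type} (M : Kripke R P W) (K : Kripke R P V)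
    (hK : ImageFinite K) (g : Nx → W) (h : Nx → V) (w : W) (v : V)
    (heq : ∀ φ : SenQF R P Nx, satQF M g w φ ↔ satQF K h v φ)
    (r : R) (w' : W) (hr : M.rel r w w') :
    ∃ v', K.rel r v v' ∧ ∀ φ : SenQF R P Nx, satQF M g w' φ ↔ satQF K h v' φ := by
  by_contra hc
  push_neg at hc
  have key : ∀ s : {v' | K.rel r v v'}, ∃ φ : SenQF R P Nx,
      satQF M g w' φ ∧ ¬ satQF K h s.1 φ := by
    rintro ⟨v', hv'⟩
    obtain ⟨φ, hφ⟩ := hc v' hv'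
    rcases hφ with ⟨hw, hv⟩ | ⟨hw, hv⟩
    · exact ⟨φ, hw, hv⟩
    · exact ⟨.neg φ, hw, fun hb => hb hv⟩
  choose F hF1 hF2 using key
  haveI : Fintype {v' | K.rel r v v'} := (hK r v).fintype
  let e := Fintype.equivFin {v' | K.rel r v v'}
  set ψ : SenQF R P Nx := .conj _ (fun i => F (e.symm i)) with hψ
  have hw : satQF M g w (.pos r ψ) := ⟨w', hr, fun i => hF1 (e.symm i)⟩
  obtain ⟨v', hv', hs⟩ := (heq (.pos r ψ)).mp hw
  have := hs (e ⟨v', hv'⟩)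
  simp only [Equiv.symm_apply_apply] at this
  exact hF2 ⟨v', hv'⟩ this

/-- Hennessy-Milner-type theorem: two image-finite pointed models
are elementarily equivalent w.r.t. the quantifier-free fragment of hybrid
propositional logic iff Eloise wins the EF game of length ω from them. -/
theorem hennessy_milner_games {R P Nn W V : Type}
    (M : Kripke R P W) (K : Kripke R P V) (g : Nn → W) (h : Nn → V)
    (w : W) (v : V)
    (hM : ImageFinite M) (hK : ImageFinite K) :
    (∀ φ : SenQF R P Nn, satQF M g w φ ↔ satQF K h v φ) ↔
      OmegaWinQF M K g w h v := by
  constructor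
  · intro heq
    refine ⟨fun Nx g w h v => ∀ φ : SenQF R P Nx, satQF M g w φ ↔ satQF K h v φ,
      heq, ?_⟩
    intro Nx g w h v hi
    refine ⟨⟨fun k => hi (.nom k), fun p => hi (.prop p)⟩, ?_,
      fun k φ => hi (.at_ k φ), fun φ => hi (.store φ)⟩
    intro r
    constructor
    · exact hm_forth M K hK g h w v hi r
    · intro v' hv'
      obtain ⟨w', hw', hw2⟩ :=
        hm_forth K M hM h g v w (fun φ => (hi φ).symm) r v' hv'
      exact ⟨w', hw', fun φ => (hw2 φ).symm⟩
  · rintro ⟨Inv, h0, hcl⟩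
    exact fun φ => sat_of_inv M K Inv hcl φ g w h v h0
end

section
/- Key step of the Hennessy-Milner argument: if (M,w) and (N,v) are elementarily equivalent pointed Kripke models in a Boolean-closed modal fragment, N is image-finite, and λ is a binary relation symbol, then for every w' with w λ^M w' there exists v' with v λ^N v' such that (M,w') and (N,v') are elementarily equivalent. -/
/-- Sentences of a Boolean-closed modal fragment: propositional symbols,
nominals, finite conjunction, negation and possibility `⟨λ⟩`. -/
inductive SenM (R P N : Type) : Type
  | prop : P → SenM R P N
  | nom : N → SenM R P N
  | conj (n : ℕ) : (Fin n → SenM R P N) → SenM R P N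
  | neg : SenM R P N → SenM R P N
  | pos : R → SenM R P N → SenM R P N

/-- Local satisfaction. -/
def satM {R P N W : Type} (M : Kripke R P W) (g : N → W) : W → SenM R P N → Prop
  | w, .prop p => M.val w p
  | w, .nom k => w = g k
  | w, .conj _ f => ∀ i, satM M g w (f i)
  | w, .neg φ => ¬ satM M g w φ
  | w, .pos r φ => ∃ v, M.rel r w v ∧ satM M g v φ

/-- key step of the Hennessy-Milner argument: if `(M,w)` and
`(N,v)` are elementarily equivalent, `N` is image-finite, and `w λ^M w'`, then
`v` has a `λ`-successor `v'` with `(M,w')` and `(N,v')` elementarily equivalent. -/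
theorem hennessy_milner_step {R P N W V : Type}
    (M : Kripke R P W) (K : Kripke R P V) (g : N → W) (h : N → V)
    (w : W) (v : V)
    (himg : ∀ (r : R) (y : V), Set.Finite {y' | K.rel r y y'})
    (heq : ∀ φ : SenM R P N, satM M g w φ ↔ satM K h v φ)
    (r : R) (w' : W) (hw' : M.rel r w w') :
    ∃ v', K.rel r v v' ∧ ∀ φ : SenM R P N, satM M g w' φ ↔ satM K h v' φ := by
  by_contra hcon
  push_neg at hcon
  -- For each successor v', pick a sentence true at w' but false at v'.
  have hsep : ∀ v' : V, K.rel r v v' →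
      ∃ φ : SenM R P N, satM M g w' φ ∧ ¬ satM K h v' φ := by
    intro v' hrel
    obtain ⟨φ, hφ⟩ := hcon v' hrel
    rcases hφ with ⟨hA, hB⟩ | ⟨hA, hB⟩
    · exact ⟨φ, hA, hB⟩
    · exact ⟨.neg φ, hA, fun hn => hn hB⟩
  have hfin := himg r v
  haveI : Fintype {y' // K.rel r v y'} := hfin.fintype
  set n := Fintype.card {y' // K.rel r v y'} with hn
  let e : {y' // K.rel r v y'} ≃ Fin n := Fintype.equivFin _
  choose F hF1 hF2 using hsep
  let G : Fin n → SenM R P N := fun i =>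
    F (e.symm i).1 (e.symm i).2
  have hψ : satM M g w (.pos r (.conj n G)) := by
    refine ⟨w', hw', fun i => ?_⟩
    exact hF1 _ _
  rw [heq] at hψ
  obtain ⟨v', hrel, hall⟩ := hψ
  have := hall (e ⟨v', hrel⟩)
  simp only [G, Equiv.symm_apply_apply] at this
  exact hF2 v' hrel this
end

section
/- Bisimilar tuples yield partial isomorphisms: assume {◇,@,↓} ⊆ O. If B is an ω-bisimulation between Kripke structures M and N over a signature Δ, and (w̄, w) B_ℓ (v̄, v), then the map h defined by h(w̄(i)) = v̄(i) for 1 ≤ i ≤ ℓ is a well-defined partial isomorphism from M to N: it is a partial bijection, for each i the worlds w̄(i) and v̄(i) satisfy the same basic sentences, and for each relation symbol λ and indices i, j, w̄(i) λ^M w̄(j) if and only if v̄(i) λ^N v̄(j). -/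
/-- bisimilar tuples yield partial isomorphisms: assume
`{◇,@,↓} ⊆ O`. If `B` is an ω-bisimulation and `(w̄,w) B_ℓ (v̄,v)`, then
`w̄(i) ↦ v̄(i)` is a well-defined partial isomorphism: a partial bijection
whose corresponding worlds satisfy the same basic sentences and which preserves
and reflects all accessibility relations. -/
theorem bisim_tuple_partial_iso {R P Nn W V : Type} {O : Ops}
    (hdia : O.dia = true) (hat : O.at_ = true) (hst : O.store = true)
    (M : Kripke R P W) (K : Kripke R P V) (g : Nn → W) (h : Nn → V)
    (B : (ℓ : ℕ) → ((Fin ℓ → W) × W) → ((Fin ℓ → V) × V) → Prop)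
    (hB : OmegaBisim O M K g h B)
    (ℓ : ℕ) (wb : Fin ℓ → W) (w : W) (vb : Fin ℓ → V) (v : V)
    (hrel : B ℓ (wb, w) (vb, v)) :
    (∀ i j : Fin ℓ, wb i = wb j ↔ vb i = vb j) ∧
    (∀ i : Fin ℓ, (∀ p : P, M.val (wb i) p ↔ K.val (vb i) p) ∧
      (∀ k : Nn, wb i = g k ↔ vb i = h k)) ∧
    (∀ (r : R) (i j : Fin ℓ), M.rel r (wb i) (wb j) ↔ K.rel r (vb i) (vb j)) := by
  have hat' := hB.atv hat
  refine ⟨?_, ?_, ?_⟩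
  · intro i j
    have hBij := hat' ℓ wb w vb v hrel j
    exact hB.wvar ℓ wb (wb j) vb (vb j) hBij i |>.symm.symm
  · intro i
    have hBi := hat' ℓ wb w vb v hrel i
    exact ⟨hB.prop ℓ wb (wb i) vb (vb i) hBi, hB.nom ℓ wb (wb i) vb (vb i) hBi⟩
  · intro r i j
    have hBi := hat' ℓ wb w vb v hrel i
    constructor
    · intro hr
      obtain ⟨v', hv', hB'⟩ := hB.forth hdia ℓ wb (wb i) vb (vb i) hBi (.rel r) (wb j) hr
      have := (hB.wvar ℓ wb (wb j) vb v' hB' j).mp rfl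
      rwa [this]
    · intro hr
      obtain ⟨w', hw', hB'⟩ := hB.back hdia ℓ wb (wb i) vb (vb i) hBi (.rel r) (vb j) hr
      have := (hB.wvar ℓ wb w' vb (vb j) hB' j).mpr rfl
      rwa [this]
end

section
/- Rooted countable ω-bisimilar models are isomorphic: assume {◇,@,↓} ⊆ O. If (M,w₀) and (N,v₀) are rooted, countable pointed Kripke structures over the same signature and there is an ω-bisimulation B between M and N with w₀ B₀ v₀, then there is an isomorphism of Kripke structures from M to N mapping w₀ to v₀. -/
namespace BisimIsoAux

/-- A "state": a finite sequence of matched worlds in each model. -/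
def StT (W V : Type) := Σ ℓ : ℕ, (Fin ℓ → W) × (Fin ℓ → V)

variable {R P Nn W V : Type} {O : Ops}
  {M : Kripke R P W} {K : Kripke R P V} {g : Nn → W} {h : Nn → V}
  {B : (ℓ : ℕ) → ((Fin ℓ → W) × W) → ((Fin ℓ → V) × V) → Prop}

def Mem1 (s : StT W V) (w : W) : Prop := ∃ j, s.2.1 j = w
def Mem2 (s : StT W V) (v : V) : Prop := ∃ j, s.2.2 j = v
def Ext (s s' : StT W V) : Prop :=
  ∀ j : Fin s.1, ∃ j' : Fin s'.1, s'.2.1 j' = s.2.1 j ∧ s'.2.2 j' = s.2.2 j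

def GoodSt (B : (ℓ : ℕ) → ((Fin ℓ → W) × W) → ((Fin ℓ → V) × V) → Prop)
    (w0 : W) (v0 : V) (s : StT W V) : Prop :=
  (∀ j, B s.1 (s.2.1, s.2.1 j) (s.2.2, s.2.2 j)) ∧
    ∃ j : Fin s.1, s.2.1 j = w0 ∧ s.2.2 j = v0

lemma pathW (hB : OmegaBisim O M K g h B) (hdia : O.dia = true)
    {ℓ : ℕ} {wb : Fin ℓ → W} {vb : Fin ℓ → V} {x : W} {y : V}
    (hxy : B ℓ (wb, x) (vb, y)) {x' : W}
    (hp : Relation.ReflTransGen (fun a b => ∃ r : R, M.rel r a b) x x') :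
    ∃ y', B ℓ (wb, x') (vb, y') := by
  induction hp with
  | refl => exact ⟨y, hxy⟩
  | tail _ hstep ih =>
      obtain ⟨y1, hy1⟩ := ih
      obtain ⟨r, hr⟩ := hstep
      obtain ⟨y2, _, hy2⟩ := hB.forth hdia _ _ _ _ _ hy1 (.rel r) _ hr
      exact ⟨y2, hy2⟩

lemma pathV (hB : OmegaBisim O M K g h B) (hdia : O.dia = true)
    {ℓ : ℕ} {wb : Fin ℓ → W} {vb : Fin ℓ → V} {x : W} {y : V}
    (hxy : B ℓ (wb, x) (vb, y)) {y' : V}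
    (hp : Relation.ReflTransGen (fun a b => ∃ r : R, K.rel r a b) y y') :
    ∃ x', B ℓ (wb, x') (vb, y') := by
  induction hp with
  | refl => exact ⟨x, hxy⟩
  | tail _ hstep ih =>
      obtain ⟨x1, hx1⟩ := ih
      obtain ⟨r, hr⟩ := hstep
      obtain ⟨x2, _, hx2⟩ := hB.back hdia _ _ _ _ _ hx1 (.rel r) _ hr
      exact ⟨x2, hx2⟩

lemma step_exists (hB : OmegaBisim O M K g h B)
    (hdia : O.dia = true) (hat : O.at_ = true) (hst : O.store = true)
    {w0 : W} {v0 : V}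
    (hrootM : ∀ x : W, Relation.ReflTransGen (fun a b => ∃ r : R, M.rel r a b) w0 x)
    (hrootK : ∀ y : V, Relation.ReflTransGen (fun a b => ∃ r : R, K.rel r a b) v0 y)
    {s : StT W V} (hs : GoodSt B w0 v0 s) (w : W) (v : V) :
    ∃ s' : StT W V, GoodSt B w0 v0 s' ∧ Mem1 s' w ∧ Mem2 s' v ∧ Ext s s' := by
  obtain ⟨ℓ, wb, vb⟩ := s
  obtain ⟨hall, j0, hj0w, hj0v⟩ := hs
  dsimp only at hall hj0w hj0v
  have h00 : B ℓ (wb, w0) (vb, v0) := by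
    have := hall j0; rwa [hj0w, hj0v] at this
  obtain ⟨y, hy⟩ := pathW hB hdia h00 (hrootM w)
  have h1 : B (ℓ+1) (Fin.snoc wb w, w) (Fin.snoc vb y, y) := hB.st hst _ _ _ _ _ hy
  have h1' : B (ℓ+1) (Fin.snoc wb w, w0) (Fin.snoc vb y, v0) := by
    have := hB.atv hat _ _ _ _ _ h1 (Fin.castSucc j0)
    rwa [Fin.snoc_castSucc, Fin.snoc_castSucc, hj0w, hj0v] at this
  obtain ⟨x, hx⟩ := pathV hB hdia h1' (hrootK v)
  have h2 : B (ℓ+2) (Fin.snoc (Fin.snoc wb w) x, x) (Fin.snoc (Fin.snoc vb y) v, v) :=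
    hB.st hst _ _ _ _ _ hx
  refine ⟨⟨ℓ+2, Fin.snoc (Fin.snoc wb w) x, Fin.snoc (Fin.snoc vb y) v⟩,
    ⟨fun j => hB.atv hat _ _ _ _ _ h2 j, ⟨Fin.castSucc (Fin.castSucc j0), ?_, ?_⟩⟩,
    ⟨Fin.castSucc (Fin.last ℓ), ?_⟩, ⟨Fin.last (ℓ+1), ?_⟩, fun j => ⟨Fin.castSucc (Fin.castSucc j), ?_, ?_⟩⟩
  · simpa using hj0w
  · simpa using hj0v
  · simp
  · simp
  · simp
  · simp

/-- The zig-zag chain of states. -/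
noncomputable def stages (hB : OmegaBisim O M K g h B)
    (hdia : O.dia = true) (hat : O.at_ = true) (hst : O.store = true)
    {w0 : W} {v0 : V}
    (hrootM : ∀ x : W, Relation.ReflTransGen (fun a b => ∃ r : R, M.rel r a b) w0 x)
    (hrootK : ∀ y : V, Relation.ReflTransGen (fun a b => ∃ r : R, K.rel r a b) v0 y)
    (h0 : B 0 (Fin.elim0, w0) (Fin.elim0, v0))
    (eW : ℕ → W) (eV : ℕ → V) : (n : ℕ) → {s : StT W V // GoodSt B w0 v0 s}
  | 0 => ⟨⟨1, fun _ => w0, fun _ => v0⟩, by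
      refine ⟨fun j => ?_, ⟨0, rfl, rfl⟩⟩
      have h1 : B 1 (Fin.snoc Fin.elim0 w0, w0) (Fin.snoc Fin.elim0 v0, v0) :=
        hB.st hst _ _ _ _ _ h0
      have he : (Fin.snoc Fin.elim0 w0 : Fin 1 → W) = fun _ => w0 := by
        funext i; simp [Fin.snoc, Fin.eq_zero i]
      have he' : (Fin.snoc Fin.elim0 v0 : Fin 1 → V) = fun _ => v0 := by
        funext i; simp [Fin.snoc, Fin.eq_zero i]
      rw [he, he'] at h1
      exact h1⟩
  | n + 1 =>
    let p := stages hB hdia hat hst hrootM hrootK h0 eW eV n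
    ⟨(step_exists hB hdia hat hst hrootM hrootK p.2 (eW n) (eV n)).choose,
      (step_exists hB hdia hat hst hrootM hrootK p.2 (eW n) (eV n)).choose_spec.1⟩

variable {R P Nn W V : Type} {O : Ops}
  {M : Kripke R P W} {K : Kripke R P V} {g : Nn → W} {h : Nn → V}
  {B : (ℓ : ℕ) → ((Fin ℓ → W) × W) → ((Fin ℓ → V) × V) → Prop}
  (hB : OmegaBisim O M K g h B)
  (hdia : O.dia = true) (hat : O.at_ = true) (hst : O.store = true)
  {w0 : W} {v0 : V}
  (hrootM : ∀ x : W, Relation.ReflTransGen (fun a b => ∃ r : R, M.rel r a b) w0 x)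
  (hrootK : ∀ y : V, Relation.ReflTransGen (fun a b => ∃ r : R, K.rel r a b) v0 y)
  (h0 : B 0 (Fin.elim0, w0) (Fin.elim0, v0))
  (eW : ℕ → W) (eV : ℕ → V)

lemma stages_spec (n : ℕ) :
    Mem1 (stages hB hdia hat hst hrootM hrootK h0 eW eV (n+1)).1 (eW n) ∧
    Mem2 (stages hB hdia hat hst hrootM hrootK h0 eW eV (n+1)).1 (eV n) ∧
    Ext (stages hB hdia hat hst hrootM hrootK h0 eW eV n).1
        (stages hB hdia hat hst hrootM hrootK h0 eW eV (n+1)).1 := by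
  have hs := (step_exists hB hdia hat hst hrootM hrootK
      (stages hB hdia hat hst hrootM hrootK h0 eW eV n).2 (eW n) (eV n)).choose_spec
  exact ⟨hs.2.1, hs.2.2.1, hs.2.2.2⟩

lemma stages_ext {m n : ℕ} (hmn : m ≤ n) :
    Ext (stages hB hdia hat hst hrootM hrootK h0 eW eV m).1
        (stages hB hdia hat hst hrootM hrootK h0 eW eV n).1 := by
  induction hmn with
  | refl => exact fun j => ⟨j, rfl, rfl⟩
  | step _ ih =>
      intro j
      obtain ⟨j', hj1, hj2⟩ := ih j
      obtain ⟨j'', hj1', hj2'⟩ := (stages_spec hB hdia hat hst hrootM hrootK h0 eW eV _).2.2 j'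
      exact ⟨j'', by rw [hj1', hj1], by rw [hj2', hj2]⟩

end BisimIsoAux

open BisimIsoAux

/-- rooted countable ω-bisimilar models are isomorphic: assume
`{◇,@,↓} ⊆ O`. If `(M,w₀)` and `(N,v₀)` are rooted countable pointed Kripke
structures related by an ω-bisimulation with `w₀ B₀ v₀`, then there is an
isomorphism of Kripke structures from `M` to `N` mapping `w₀` to `v₀`. -/
theorem rooted_countable_bisim_implies_iso {R P Nn W V : Type} {O : Ops}
    (hdia : O.dia = true) (hat : O.at_ = true) (hst : O.store = true)
    (M : Kripke R P W) (K : Kripke R P V) (g : Nn → W) (h : Nn → V)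
    (w0 : W) (v0 : V)
    [Countable W] [Countable V]
    (hrootM : ∀ x : W, Relation.ReflTransGen (fun a b => ∃ r : R, M.rel r a b) w0 x)
    (hrootK : ∀ y : V, Relation.ReflTransGen (fun a b => ∃ r : R, K.rel r a b) v0 y)
    (B : (ℓ : ℕ) → ((Fin ℓ → W) × W) → ((Fin ℓ → V) × V) → Prop)
    (hB : OmegaBisim O M K g h B)
    (h0 : B 0 (Fin.elim0, w0) (Fin.elim0, v0)) :
    ∃ f : W ≃ V, f w0 = v0 ∧
      (∀ (r : R) (a b : W), M.rel r a b ↔ K.rel r (f a) (f b)) ∧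
      (∀ k : Nn, f (g k) = h k) ∧
      (∀ (a : W) (p : P), M.val a p ↔ K.val (f a) p) := by
  have : Nonempty W := ⟨w0⟩
  have : Nonempty V := ⟨v0⟩
  obtain ⟨eW, heW⟩ := exists_surjective_nat W
  obtain ⟨eV, heV⟩ := exists_surjective_nat V
  set st := stages hB hdia hat hst hrootM hrootK h0 eW eV with hstdef
  -- the limit relation
  set Rel : W → V → Prop :=
    fun w v => ∃ (n : ℕ) (j : Fin (st n).1.1), (st n).1.2.1 j = w ∧ (st n).1.2.2 j = v with hReldef
  -- a common stage for two related pairs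
  have common : ∀ {a fa b fb}, Rel a fa → Rel b fb →
      ∃ (n : ℕ) (ja jb : Fin (st n).1.1),
        (st n).1.2.1 ja = a ∧ (st n).1.2.2 ja = fa ∧
        (st n).1.2.1 jb = b ∧ (st n).1.2.2 jb = fb := by
    rintro a fa b fb ⟨m, j, hj1, hj2⟩ ⟨m', j', hj1', hj2'⟩
    obtain ⟨ja, ha1, ha2⟩ :=
      stages_ext hB hdia hat hst hrootM hrootK h0 eW eV (le_max_left m m') j
    obtain ⟨jb, hb1, hb2⟩ :=
      stages_ext hB hdia hat hst hrootM hrootK h0 eW eV (le_max_right m m') j'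
    exact ⟨max m m', ja, jb, by rw [ha1, hj1], by rw [ha2, hj2],
      by rw [hb1, hj1'], by rw [hb2, hj2']⟩
  -- the bisimulation fact at a pair
  have bfact : ∀ (n : ℕ) (j : Fin (st n).1.1) (a : W) (fa : V),
      (st n).1.2.1 j = a → (st n).1.2.2 j = fa →
      B (st n).1.1 ((st n).1.2.1, a) ((st n).1.2.2, fa) := by
    intro n j a fa h1 h2
    have := (st n).2.1 j
    rwa [h1, h2] at this
  -- coherence
  have coh : ∀ {a fa b fb}, Rel a fa → Rel b fb → (a = b ↔ fa = fb) := by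
    intro a fa b fb ha hb
    obtain ⟨n, ja, jb, ha1, ha2, hb1, hb2⟩ := common ha hb
    have hbf := bfact n ja a fa ha1 ha2
    have := hB.wvar _ _ _ _ _ hbf jb
    rw [hb1, hb2] at this
    constructor
    · intro hh; exact (this.mp hh.symm).symm
    · intro hh; exact (this.mpr hh.symm).symm
  have total1 : ∀ w : W, ∃ v, Rel w v := by
    intro w
    obtain ⟨n, rfl⟩ := heW w
    obtain ⟨j, hj⟩ := (stages_spec hB hdia hat hst hrootM hrootK h0 eW eV n).1
    exact ⟨(st (n+1)).1.2.2 j, n+1, j, hj, rfl⟩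
  have total2 : ∀ v : V, ∃ w, Rel w v := by
    intro v
    obtain ⟨n, rfl⟩ := heV v
    obtain ⟨j, hj⟩ := (stages_spec hB hdia hat hst hrootM hrootK h0 eW eV n).2.1
    exact ⟨(st (n+1)).1.2.1 j, n+1, j, rfl, hj⟩
  choose f hf using total1
  choose fi hfi using total2
  have hRel0 : Rel w0 v0 := by
    obtain ⟨j, hj1, hj2⟩ := (st 0).2.2
    exact ⟨0, j, hj1, hj2⟩
  refine ⟨⟨f, fi, fun w => (coh (hfi (f w)) (hf w)).mpr rfl,
      fun v => (coh (hf (fi v)) (hfi v)).mp rfl⟩, ?_, ?_, ?_, ?_⟩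
  · exact (coh (hf w0) hRel0).mp rfl
  · intro r a b
    obtain ⟨n, ja, jb, ha1, ha2, hb1, hb2⟩ := common (hf a) (hf b)
    have hbf := bfact n ja a (f a) ha1 ha2
    constructor
    · intro hr
      obtain ⟨v', hkr, hb'⟩ := hB.forth hdia _ _ _ _ _ hbf (.rel r) b hr
      have := hB.wvar _ _ _ _ _ hb' jb
      rw [hb1, hb2] at this  -- b = b ↔ f b = v'  (after rewriting)
      have hv' : f b = v' := this.mp rfl
      show K.rel r (f a) (f b)
      rw [hv']
      exact hkr
    · intro hr
      obtain ⟨w', hmr, hb'⟩ := hB.back hdia _ _ _ _ _ hbf (.rel r) (f b) hr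
      have := hB.wvar _ _ _ _ _ hb' jb
      rw [hb1, hb2] at this
      have hw' : b = w' := this.mpr rfl
      rw [hw']
      exact hmr
  · intro k
    obtain ⟨n, j, hj1, hj2⟩ := hf (g k)
    have hbf := bfact n j (g k) (f (g k)) hj1 hj2
    exact (hB.nom _ _ _ _ _ hbf k).mp rfl
  · intro a p
    obtain ⟨n, j, hj1, hj2⟩ := hf a
    exact hB.prop _ _ _ _ _ (bfact n j a (f a) hj1 hj2) p
end

section
/- For rooted image-finite pointed Kripke models and a fragment with {◇,@,↓} ⊆ O and no existential quantifier, elementary equivalence implies isomorphism: (M,w) and (N,v) are elementarily equivalent if and only if there is an isomorphism of Kripke structures M ≅ N mapping w to v. -/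
namespace S16

variable {R P Nn W V : Type}

/-- renaming of nominals -/
def ren {N N' : Type} (σ : N → N') : SenQF R P N → SenQF R P N'
  | .prop p => .prop p
  | .nom k => .nom (σ k)
  | .conj n f => .conj n (fun i => ren σ (f i))
  | .neg φ => .neg (ren σ φ)
  | .pos r φ => .pos r (ren σ φ)
  | .at_ k φ => .at_ (σ k) (ren σ φ)
  | .store φ => .store (ren (Option.map σ) φ)

theorem sat_ren {M : Kripke R P W} {N : Type} (φ : SenQF R P N) :
    ∀ {N' : Type} (σ : N → N') (g : N' → W) (x : W),
      satQF M g x (ren σ φ) ↔ satQF M (g ∘ σ) x φ := by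
  induction φ with
  | prop p => intro N' σ g x; exact Iff.rfl
  | nom k => intro N' σ g x; exact Iff.rfl
  | conj n f ih =>
      intro N' σ g x
      simp only [ren, satQF]
      exact forall_congr' fun i => ih i σ g x
  | neg φ ih => intro N' σ g x; exact not_congr (ih σ g x)
  | pos r φ ih =>
      intro N' σ g x
      simp only [ren, satQF]
      exact exists_congr fun z => and_congr_right fun _ => ih σ g z
  | at_ k φ ih => intro N' σ g x; exact ih σ g (g (σ k))
  | store φ ih =>
      intro N' σ g x
      simp only [ren, satQF]
      rw [ih (Option.map σ)]
      rw [show extOpt g x ∘ Option.map σ = extOpt (g ∘ σ) x from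
        funext fun o => by cases o <;> rfl]

variable (M : Kripke R P W) (K : Kripke R P V) (g : Nn → W) (h : Nn → V) (w : W) (v : V)

/-- A finite tuple of paired worlds is "good" if the corresponding extended
configurations are elementarily equivalent. -/
def Good {n : ℕ} (a : Fin n → W) (b : Fin n → V) : Prop :=
  ∀ φ : SenQF R P (Nn ⊕ Fin n),
    satQF M (Sum.elim g a) w φ ↔ satQF K (Sum.elim h b) v φ

variable {M K g h w v}

theorem Good.of_comp {m n : ℕ} {a : Fin n → W} {b : Fin n → V}
    (H : Good M K g h w v a b) (σ : Fin m → Fin n)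
    {a' : Fin m → W} {b' : Fin m → V}
    (ha : ∀ j, a' j = a (σ j)) (hb : ∀ j, b' j = b (σ j)) :
    Good M K g h w v a' b' := by
  intro φ
  have h1 := H (ren (Sum.map id σ) φ)
  rw [sat_ren, sat_ren] at h1
  rwa [show Sum.elim g a ∘ Sum.map id σ = Sum.elim g a' from
        funext fun s => by cases s with
          | inl k => rfl
          | inr j => exact (ha j).symm,
      show Sum.elim h b ∘ Sum.map id σ = Sum.elim h b' from
        funext fun s => by cases s with
          | inl k => rfl
          | inr j => exact (hb j).symm] at h1

theorem Good.symm {n : ℕ} {a : Fin n → W} {b : Fin n → V}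
    (H : Good M K g h w v a b) : Good K M h g v w b a :=
  fun φ => (H φ).symm

/-- the renaming used when a stored world becomes the last tuple entry -/
def tau (Nn : Type) (n : ℕ) : Nn ⊕ Fin (n + 1) → Option (Nn ⊕ Fin n) :=
  Sum.elim (fun k => some (Sum.inl k))
    (Fin.lastCases none (fun j => some (Sum.inr j)))

theorem sat_tau {M : Kripke R P W} {g : Nn → W} {n : ℕ} (a : Fin n → W)
    (x'' w₀ : W) (φ : SenQF R P (Nn ⊕ Fin (n + 1))) :
    satQF M (extOpt (Sum.elim g a) x'') w₀ (ren (tau Nn n) φ) ↔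
      satQF M (Sum.elim g (Fin.snoc a x'')) w₀ φ := by
  rw [sat_ren]
  rw [show extOpt (Sum.elim g a) x'' ∘ tau Nn n = Sum.elim g (Fin.snoc a x'') from
    funext fun s => by
      cases s with
      | inl k => rfl
      | inr j =>
          refine Fin.lastCases ?_ ?_ j
          · simp [tau, extOpt]
          · intro j0; simp [tau, extOpt]]

theorem good_base (Hbase : ∀ φ : SenQF R P Nn, satQF M g w φ ↔ satQF K h v φ) :
    Good M K g h w v (fun _ : Fin 1 => w) (fun _ : Fin 1 => v) := by
  intro φ
  let σ : Nn ⊕ Fin 1 → Option Nn := Sum.elim some (fun _ => none)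
  have hM' : ∀ {W' : Type} (M' : Kripke R P W') (g' : Nn → W') (w' : W'),
      satQF M' g' w' (.store (ren σ φ)) ↔
        satQF M' (Sum.elim g' (fun _ : Fin 1 => w')) w' φ := by
    intro W' M' g' w'
    show satQF M' (extOpt g' w') w' (ren σ φ) ↔ _
    rw [sat_ren]
    rw [show extOpt g' w' ∘ σ = Sum.elim g' (fun _ : Fin 1 => w') from
      funext fun s => by cases s <;> rfl]
  rw [← hM' M g w, ← hM' K h v]
  exact Hbase _

theorem not_iff_cases {A B : Prop} (hAB : ¬(A ↔ B)) : (A ∧ ¬B) ∨ (¬A ∧ B) := by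
  tauto

/-- the key "forth" step for finite tuples, by image-finiteness -/
theorem Good.forth (hK : ImageFinite K) {n : ℕ} {a : Fin n → W} {b : Fin n → V}
    (hg : Good M K g h w v a b) (i0 i : Fin n) (ha0 : a i0 = w) (hb0 : b i0 = v)
    (r : R) {x' : W} (hx : M.rel r (a i) x') :
    ∃ y', K.rel r (b i) y' ∧
      Good M K g h w v (Fin.snoc a x') (Fin.snoc b y') := by
  by_contra hno
  push_neg at hno
  have hsel : ∀ y' : V, ∃ φ : SenQF R P (Nn ⊕ Fin (n + 1)),
      K.rel r (b i) y' →
        satQF M (Sum.elim g (Fin.snoc a x')) w φ ∧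
        ¬ satQF K (Sum.elim h (Fin.snoc b y')) v φ := by
    intro y'
    by_cases hrel : K.rel r (b i) y'
    · have hng := hno y' hrel
      obtain ⟨φ, hφ⟩ := not_forall.mp hng
      rcases not_iff_cases hφ with ⟨h1, h2⟩ | ⟨h1, h2⟩
      · exact ⟨φ, fun _ => ⟨h1, h2⟩⟩
      · exact ⟨.neg φ, fun _ => ⟨h1, fun hc => hc h2⟩⟩
    · exact ⟨.conj 0 Fin.elim0, fun hc => absurd hc hrel⟩
  choose F hF using hsel
  classical
  let S : Finset V := (hK r (b i)).toFinset
  have hmemS : ∀ y', y' ∈ S ↔ K.rel r (b i) y' := by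
    intro y'; simp [S, Set.Finite.mem_toFinset]
  let e := S.equivFin
  let ψ : SenQF R P (Nn ⊕ Fin n) :=
    .at_ (Sum.inr i) (.pos r (.store (.at_ (some (Sum.inr i0))
      (.conj S.card (fun j => ren (tau Nn n) (F ((e.symm j : S) : V)))))))
  have hMψ : satQF M (Sum.elim g a) w ψ := by
    show satQF M (Sum.elim g a) (Sum.elim g a (Sum.inr i)) _
    refine ⟨x', hx, ?_⟩
    show satQF M (extOpt (Sum.elim g a) x')
      (extOpt (Sum.elim g a) x' (some (Sum.inr i0))) (.conj _ _)
    have : extOpt (Sum.elim g a) x' (some (Sum.inr i0)) = w := ha0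
    rw [this]
    intro j
    exact (sat_tau a x' w _).mpr
      (hF _ ((hmemS _).mp (e.symm j).2)).1
  have hKψ := (hg ψ).mp hMψ
  obtain ⟨z', hz', hconj⟩ := hKψ
  have hzS : z' ∈ S := (hmemS z').mpr hz'
  have hcj := hconj (e ⟨z', hzS⟩)
  simp only [Equiv.symm_apply_apply] at hcj
  have : extOpt (Sum.elim h b) z' (some (Sum.inr i0)) = v := hb0
  rw [this] at hcj
  exact (hF z' hz').2 ((sat_tau b z' v _).mp hcj)

variable (M K g h w v) in
/-- a set of pairs all of whose finite tuples are good -/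
def GoodSet (p : Set (W × V)) : Prop :=
  ∀ (n : ℕ) (c : Fin n → W × V), (∀ i, c i ∈ p) →
    Good M K g h w v (fun i => (c i).1) (fun i => (c i).2)

theorem Good.snoc_of_comp {m n : ℕ} {a : Fin n → W} {b : Fin n → V} {x' : W} {y' : V}
    (H : Good M K g h w v (Fin.snoc a x') (Fin.snoc b y'))
    (σ : Fin m → Fin n) {a' : Fin m → W} {b' : Fin m → V}
    (ha : ∀ j, a' j = a (σ j)) (hb : ∀ j, b' j = b (σ j)) :
    Good M K g h w v (Fin.snoc a' x') (Fin.snoc b' y') := by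
  refine H.of_comp (Fin.snoc (fun j => (σ j).castSucc) (Fin.last n)) ?_ ?_
  · intro j
    refine Fin.lastCases ?_ ?_ j
    · simp
    · intro j0; simp [ha j0]
  · intro j
    refine Fin.lastCases ?_ ?_ j
    · simp
    · intro j0; simp [hb j0]

theorem goodSet_swap {p : Set (W × V)} (hp : GoodSet M K g h w v p) :
    GoodSet K M h g v w (Prod.swap ⁻¹' p) := by
  intro n c hc
  have := hp n (fun i => ((c i).2, (c i).1)) (fun i => hc i)
  exact fun φ => (this φ).symm

theorem goodSet_singleton (Hbase : ∀ φ : SenQF R P Nn, satQF M g w φ ↔ satQF K h v φ) :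
    GoodSet M K g h w v {(w, v)} := by
  intro n c hc
  refine (good_base Hbase).of_comp (fun _ => 0) ?_ ?_
  · intro j; have := hc j; simp only [Set.mem_singleton_iff] at this
    rw [this]
  · intro j; have := hc j; simp only [Set.mem_singleton_iff] at this
    rw [this]

/-- the "forth" step at the level of good sets, using a minimal-candidate
compactness argument -/
theorem GoodSet.forth (hK : ImageFinite K) {p : Set (W × V)}
    (hp : GoodSet M K g h w v p) (hwv : (w, v) ∈ p)
    {aa : W × V} (haa : aa ∈ p) (r : R) {x' : W} (hx : M.rel r aa.1 x') :
    ∃ y', K.rel r aa.2 y' ∧ GoodSet M K g h w v (insert (x', y') p) := by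
  classical
  let S : Finset V := (hK r aa.2).toFinset
  have hmemS : ∀ y', y' ∈ S ↔ K.rel r aa.2 y' := by
    intro y'; simp [S, Set.Finite.mem_toFinset]
  -- candidate images for a given tuple
  let cand : ∀ (n : ℕ) (c : Fin n → W × V), Finset V := fun n c =>
    S.filter (fun y' =>
      Good M K g h w v (Fin.snoc (fun i => (c i).1) x')
        (Fin.snoc (fun i => (c i).2) y'))
  -- every candidate set (for a tuple from p) is nonempty
  have hne : ∀ (n : ℕ) (c : Fin n → W × V), (∀ i, c i ∈ p) →
      (cand n c).Nonempty := by
    intro n c hc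
    -- extend tuple by (w,v) and aa
    let c' : Fin (n + 2) → W × V := Fin.snoc (Fin.snoc c (w, v)) aa
    have hc' : ∀ i, c' i ∈ p := by
      intro i
      refine Fin.lastCases ?_ ?_ i
      · simpa [c'] using haa
      · intro j
        refine Fin.lastCases ?_ ?_ j
        · simpa [c'] using hwv
        · intro j0; simpa [c'] using hc j0
    have hgood := hp (n + 2) c' hc'
    obtain ⟨y', hrel, hGood⟩ := hgood.forth hK
      ((Fin.last n).castSucc) (Fin.last (n + 1)) (by simp [c']) (by simp [c'])
      r (by simpa [c'] using hx)
    refine ⟨y', ?_⟩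
    rw [Finset.mem_filter]
    refine ⟨(hmemS y').mpr (by simpa [c'] using hrel), ?_⟩
    -- restrict back from c' to c
    have hGood' : Good M K g h w v
        (Fin.snoc (fun i => (c' i).1) x') (Fin.snoc (fun i => (c' i).2) y') := by
      refine hGood.of_comp id ?_ ?_ <;> intro j <;>
        · refine Fin.lastCases ?_ ?_ j
          · simp
          · intro j0; simp
    exact hGood'.snoc_of_comp (fun j : Fin n => (j.castSucc).castSucc)
      (by intro j; simp [c']) (by intro j; simp [c'])
  -- choose a tuple with minimal candidate set
  let A : Set ℕ := {k | ∃ n c, (∀ i, c i ∈ p) ∧ (cand n c).card = k}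
  have hAne : A.Nonempty :=
    ⟨(cand 0 Fin.elim0).card, 0, Fin.elim0, fun i => i.elim0, rfl⟩
  obtain ⟨n0, c0, hc0, hcard0⟩ := Nat.sInf_mem hAne
  have hmin : ∀ n c, (∀ i : Fin n, c i ∈ p) → (cand n0 c0).card ≤ (cand n c).card := by
    intro n c hc; rw [hcard0]; exact Nat.sInf_le ⟨n, c, hc, rfl⟩
  have hsub : ∀ n c, (∀ i : Fin n, c i ∈ p) → cand n0 c0 ⊆ cand n c := by
    intro n c hc
    let d : Fin (n0 + n) → W × V := Fin.append c0 c
    have hd : ∀ i, d i ∈ p := by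
      intro i
      refine Fin.addCases ?_ ?_ i
      · intro j; simpa [d, Fin.append_left] using hc0 j
      · intro j; simpa [d, Fin.append_right] using hc j
    have h1 : cand (n0 + n) d ⊆ cand n0 c0 := by
      intro y' hy'
      rw [Finset.mem_filter] at hy' ⊢
      refine ⟨hy'.1, hy'.2.snoc_of_comp (Fin.castAdd n) ?_ ?_⟩ <;>
        · intro j; simp [d, Fin.append_left]
    have h2 : cand (n0 + n) d ⊆ cand n c := by
      intro y' hy'
      rw [Finset.mem_filter] at hy' ⊢
      refine ⟨hy'.1, hy'.2.snoc_of_comp (Fin.natAdd n0) ?_ ?_⟩ <;>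
        · intro j; simp [d, Fin.append_right]
    have heq := Finset.eq_of_subset_of_card_le h1 (hmin _ _ hd)
    rw [← heq]; exact h2
  obtain ⟨y0, hy0⟩ := hne n0 c0 hc0
  refine ⟨y0, (hmemS y0).mp (Finset.mem_filter.mp hy0).1, ?_⟩
  intro m d hd
  let c : Fin m → W × V := fun j => if d j ∈ p then d j else (w, v)
  have hc : ∀ j, c j ∈ p := by
    intro j; by_cases hj : d j ∈ p <;> simp [c, hj, hwv]
  have hy0' := hsub m c hc hy0
  rw [Finset.mem_filter] at hy0'
  refine hy0'.2.of_comp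
    (fun j => if d j ∈ p then (Fin.castSucc j) else Fin.last m) ?_ ?_
  · intro j; by_cases hj : d j ∈ p
    · simp [hj, c]
    · have hdj : d j = (x', y0) := by
        rcases hd j with h' | h'
        · exact h'
        · exact absurd h' hj
      simp only [if_neg hj, Fin.snoc_last]
      rw [hdj]
  · intro j; by_cases hj : d j ∈ p
    · simp [hj, c]
    · have hdj : d j = (x', y0) := by
        rcases hd j with h' | h'
        · exact h'
        · exact absurd h' hj
      simp only [if_neg hj, Fin.snoc_last]
      rw [hdj]

/-- every reachable world can be added to a good set -/
theorem GoodSet.reach (hK : ImageFinite K) {x : W}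
    (hx : Relation.ReflTransGen (fun a b => ∃ r : R, M.rel r a b) w x) :
    ∀ p : Set (W × V), GoodSet M K g h w v p → (w, v) ∈ p →
      ∃ p', p ⊆ p' ∧ GoodSet M K g h w v p' ∧ (w, v) ∈ p' ∧ ∃ y, (x, y) ∈ p' := by
  induction hx with
  | refl => exact fun p hp hwv => ⟨p, subset_rfl, hp, hwv, v, hwv⟩
  | tail hab hstep ih =>
      intro p hp hwv
      obtain ⟨p1, hsub1, hp1, hwv1, y1, hy1⟩ := ih p hp hwv
      obtain ⟨r, hr⟩ := hstep
      obtain ⟨y', _, hp2⟩ := hp1.forth hK hwv1 hy1 r hr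
      exact ⟨_, hsub1.trans (Set.subset_insert _ _), hp2,
        Set.subset_insert _ _ hwv1, y', Set.mem_insert _ _⟩

/-- chains of good sets have good unions -/
theorem goodSet_sUnion {C : Set (Set (W × V))}
    (hC : ∀ q ∈ C, GoodSet M K g h w v q) (hch : IsChain (· ⊆ ·) C)
    (hne : C.Nonempty) : GoodSet M K g h w v (⋃₀ C) := by
  intro n c hc
  -- find a single member of the chain containing all entries
  have : ∃ q ∈ C, ∀ i, c i ∈ q := by
    induction n with
    | zero => exact ⟨hne.choose, hne.choose_spec, fun i => i.elim0⟩
    | succ m ih =>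
        obtain ⟨q, hqC, hq⟩ := ih (fun i => c i.castSucc)
          (fun i => hc i.castSucc)
        obtain ⟨q', hq'C, hq'⟩ := hc (Fin.last m)
        rcases eq_or_ne q q' with rfl | hne'
        · refine ⟨q, hqC, fun i => ?_⟩
          refine Fin.lastCases hq' (fun j => hq j) i
        · rcases hch hqC hq'C hne' with hle | hle
          · refine ⟨q', hq'C, fun i => ?_⟩
            refine Fin.lastCases hq' (fun j => hle (hq j)) i
          · refine ⟨q, hqC, fun i => ?_⟩
            refine Fin.lastCases (hle hq') (fun j => hq j) i
  obtain ⟨q, hqC, hq⟩ := this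
  exact hC q hqC n c hq

section PropsOfGoodSet

variable {p : Set (W × V)} (hp : GoodSet M K g h w v p)

theorem GoodSet.pair2 (hp : GoodSet M K g h w v p)
    {aa bb : W × V} (ha : aa ∈ p) (hb : bb ∈ p)
    (φ : SenQF R P (Nn ⊕ Fin 2)) :
    satQF M (Sum.elim g ![aa.1, bb.1]) w φ ↔
      satQF K (Sum.elim h ![aa.2, bb.2]) v φ := by
  have := hp 2 ![aa, bb] (fun i => by fin_cases i <;> simpa)
  refine (this.of_comp id ?_ ?_ φ) <;> (intro j; fin_cases j <;> rfl)

theorem GoodSet.functional (hp : GoodSet M K g h w v p)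
    {a : W} {y1 y2 : V} (h1 : (a, y1) ∈ p) (h2 : (a, y2) ∈ p) : y1 = y2 := by
  have := (hp.pair2 h1 h2 (.at_ (Sum.inr 0) (.nom (Sum.inr 1)))).mp
  simp only [satQF, Sum.elim_inr] at this
  exact this (by simp)

theorem GoodSet.injective (hp : GoodSet M K g h w v p)
    {a1 a2 : W} {y : V} (h1 : (a1, y) ∈ p) (h2 : (a2, y) ∈ p) : a1 = a2 := by
  have := (hp.pair2 h1 h2 (.at_ (Sum.inr 0) (.nom (Sum.inr 1)))).mpr
  simp only [satQF, Sum.elim_inr] at this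
  exact this (by simp)

theorem GoodSet.rel_iff (hp : GoodSet M K g h w v p)
    {aa bb : W × V} (ha : aa ∈ p) (hb : bb ∈ p) (r : R) :
    M.rel r aa.1 bb.1 ↔ K.rel r aa.2 bb.2 := by
  have := hp.pair2 ha hb (.at_ (Sum.inr 0) (.pos r (.nom (Sum.inr 1))))
  simpa only [satQF, Sum.elim_inr, Matrix.cons_val_zero, Matrix.cons_val_one,
    Matrix.head_cons, exists_eq_right_right, exists_eq_right] using this

theorem GoodSet.val_iff (hp : GoodSet M K g h w v p)
    {aa : W × V} (ha : aa ∈ p) (q : P) :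
    M.val aa.1 q ↔ K.val aa.2 q := by
  have := hp.pair2 ha ha (.at_ (Sum.inr 0) (.prop q))
  simpa only [satQF, Sum.elim_inr, Matrix.cons_val_zero] using this

theorem GoodSet.nom_eq (hp : GoodSet M K g h w v p)
    {y : V} (k : Nn) (hk : (g k, y) ∈ p) : y = h k := by
  have := (hp.pair2 hk hk (.at_ (Sum.inr 0) (.nom (Sum.inl k)))).mp
  simp only [satQF, Sum.elim_inr, Sum.elim_inl, Matrix.cons_val_zero] at this
  exact this trivial

end PropsOfGoodSet

/-- the easy direction: isomorphisms preserve satisfaction -/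
theorem sat_iso (f : W ≃ V)
    (hrel : ∀ (r : R) (a b : W), M.rel r a b ↔ K.rel r (f a) (f b))
    (hval : ∀ (a : W) (q : P), M.val a q ↔ K.val (f a) q)
    {N : Type} (φ : SenQF R P N) :
    ∀ (g' : N → W) (x : W), satQF M g' x φ ↔ satQF K (f ∘ g') (f x) φ := by
  induction φ with
  | prop q => intro g' x; exact hval x q
  | nom k => intro g' x; exact (Equiv.apply_eq_iff_eq f).symm
  | conj n fs ih =>
      intro g' x
      exact forall_congr' fun i => ih i g' x
  | neg φ ih => intro g' x; exact not_congr (ih g' x)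
  | pos r φ ih =>
      intro g' x
      constructor
      · rintro ⟨z, hz, hs⟩
        exact ⟨f z, (hrel r x z).mp hz, (ih g' z).mp hs⟩
      · rintro ⟨z', hz', hs⟩
        refine ⟨f.symm z', ?_, ?_⟩
        · rw [hrel r x (f.symm z'), Equiv.apply_symm_apply]; exact hz'
        · have := (ih g' (f.symm z')).mpr
          rw [Equiv.apply_symm_apply] at this
          exact this hs
  | at_ k φ ih => intro g' x; exact ih g' (g' k)
  | store φ ih =>
      intro g' x
      show satQF M (extOpt g' x) x φ ↔ satQF K (extOpt (f ∘ g') (f x)) (f x) φ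
      rw [ih (extOpt g' x) x,
        show f ∘ extOpt g' x = extOpt (f ∘ g') (f x) from
          funext fun o => by cases o <;> rfl]

end S16

open S16 in
/-- for rooted image-finite pointed Kripke models, elementary
equivalence w.r.t. the quantifier-free fragment (nominals, propositional
symbols, Boolean connectives, `⟨λ⟩`, `@`, `↓`; no `∃`) coincides with the
existence of an isomorphism of Kripke structures mapping `w` to `v`. -/
theorem rooted_image_finite_equiv_iff_iso {R P Nn W V : Type}
    (M : Kripke R P W) (K : Kripke R P V) (g : Nn → W) (h : Nn → V)
    (w : W) (v : V)
    (hM : ImageFinite M) (hK : ImageFinite K)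
    (hrootM : ∀ x : W, Relation.ReflTransGen (fun a b => ∃ r : R, M.rel r a b) w x)
    (hrootK : ∀ y : V, Relation.ReflTransGen (fun a b => ∃ r : R, K.rel r a b) v y) :
    (∀ φ : SenQF R P Nn, satQF M g w φ ↔ satQF K h v φ) ↔
      ∃ f : W ≃ V, f w = v ∧
        (∀ (r : R) (a b : W), M.rel r a b ↔ K.rel r (f a) (f b)) ∧
        (∀ k : Nn, f (g k) = h k) ∧
        (∀ (a : W) (p : P), M.val a p ↔ K.val (f a) p) := by
  constructor
  · intro Heq
    classical
    let SS : Set (Set (W × V)) := {p | GoodSet M K g h w v p ∧ (w, v) ∈ p}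
    obtain ⟨p, hsub0, hm⟩ := zorn_subset_nonempty SS
      (by
        intro C hCS hch hCne
        refine ⟨⋃₀ C, ⟨goodSet_sUnion (fun q hq => (hCS hq).1) hch hCne, ?_⟩,
          fun s hs => Set.subset_sUnion_of_mem hs⟩
        obtain ⟨q, hq⟩ := hCne
        exact Set.subset_sUnion_of_mem hq (hCS hq).2)
      {(w, v)} ⟨goodSet_singleton Heq, rfl⟩
    have hp : GoodSet M K g h w v p := hm.1.1
    have hwvp : (w, v) ∈ p := hm.1.2
    have htot : ∀ x : W, ∃ y, (x, y) ∈ p := by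
      intro x
      obtain ⟨p', hsub, hp', hwv', y, hy⟩ :=
        GoodSet.reach hK (hrootM x) p hp hwvp
      exact ⟨y, hm.2 ⟨hp', hwv'⟩ hsub hy⟩
    have hsurj : ∀ y : V, ∃ x, (x, y) ∈ p := by
      intro y
      have hq := goodSet_swap hp
      have hvw : (v, w) ∈ Prod.swap ⁻¹' p := hwvp
      obtain ⟨q', hsubq, hq', hvw', x, hx⟩ :=
        GoodSet.reach hM (hrootK y) _ hq hvw
      have hps := goodSet_swap hq'
      have hsub' : p ⊆ Prod.swap ⁻¹' q' := by
        rintro ⟨a, b⟩ hab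
        exact hsubq (show (b, a) ∈ Prod.swap ⁻¹' p from hab)
      exact ⟨x, hm.2 ⟨hps, hsub' hwvp⟩ hsub'
        (show Prod.swap (x, y) ∈ q' from hx)⟩
    choose fo hfo using htot
    choose fi hfi using hsurj
    let f : W ≃ V :=
      ⟨fo, fi,
        fun x => hp.injective (hfi (fo x)) (hfo x),
        fun y => hp.functional (hfo (fi y)) (hfi y)⟩
    refine ⟨f, hp.functional (hfo w) hwvp, ?_, ?_, ?_⟩
    · intro r a b
      exact hp.rel_iff (hfo a) (hfo b) r
    · intro k
      exact hp.nom_eq k (hfo (g k))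
    · intro a q
      exact hp.val_iff (hfo a) q
  · rintro ⟨f, hfw, hrel, hnom, hval⟩ φ
    have := sat_iso f hrel hval φ g w
    rwa [show f ∘ g = h from funext hnom, hfw] at this
end

section
/- Expressibility of finiteness in hybrid-dynamic logic: over the signature with nominals k₁, k₂ and one binary relation λ, every Kripke model satisfying the conjunction φ₁ ∧ φ₂ ∧ φ₃ ∧ φ₄ (stating: k₁ has a unique λ-successor and no λ-predecessor; k₂ has a unique λ-predecessor and no λ-successor; every world other than k₁ and k₂ has a unique λ-predecessor and a unique λ-successor; and any two worlds are connected by a λ*-path in one direction or the other) has a finite set of worlds. -/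
/-- expressibility of finiteness in hybrid-dynamic logic: over
the signature with nominals `k₁, k₂` and a single binary relation `λ`, every
Kripke model satisfying `φ₁ ∧ φ₂ ∧ φ₃ ∧ φ₄` — `k₁` has a unique `λ`-successor
and no `λ`-predecessor, `k₂` has a unique `λ`-predecessor and no `λ`-successor,
every other world has a unique `λ`-predecessor and a unique `λ`-successor, and
any two worlds are connected by a `λ*`-path in one direction or the other — has
a finite set of worlds. -/
theorem finite_models_expressible {W : Type} (M : Kripke Unit Empty W)
    (k₁ k₂ : W)
    (h1 : (∃! x, M.rel () k₁ x) ∧ (∀ y, ¬ M.rel () y k₁))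
    (h2 : (∃! x, M.rel () x k₂) ∧ (∀ y, ¬ M.rel () k₂ y))
    (h3 : ∀ x, x ≠ k₁ → x ≠ k₂ → (∃! y, M.rel () y x) ∧ (∃! z, M.rel () x z))
    (h4 : ∀ x y, actRel M (Act.star (Act.rel ())) x y ∨
                 actRel M (Act.star (Act.rel ())) y x) :
    Finite W := by
  classical
  set r : W → W → Prop := M.rel () with hr
  have h4' : ∀ x y, Relation.ReflTransGen r x y ∨ Relation.ReflTransGen r y x := h4
  -- anything reachable from k₂ is k₂
  have hk2 : ∀ x, Relation.ReflTransGen r k₂ x → x = k₂ := by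
    intro x hx
    induction hx with
    | refl => rfl
    | tail _ hstep ih => exact absurd (ih ▸ hstep) (h2.2 _)
  -- anything reaching k₁ is k₁
  have hk1 : ∀ x, Relation.ReflTransGen r x k₁ → x = k₁ := by
    intro x hx
    rcases (Relation.ReflTransGen.cases_tail hx) with h | ⟨c, _, hc⟩
    · exact h.symm
    · exact absurd hc (h1.2 _)
  -- every world reachable from k₁
  have hfrom : ∀ x, Relation.ReflTransGen r k₁ x := by
    intro x
    rcases h4' k₁ x with h | h
    · exact h
    · exact (hk1 x h) ▸ Relation.ReflTransGen.refl
  -- unique successor for x ≠ k₂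
  have hsucc : ∀ x, x ≠ k₂ → ∃! z, r x z := by
    intro x hx
    by_cases h : x = k₁
    · exact h ▸ h1.1
    · exact (h3 x h hx).2
  -- define step function
  let f : W → W := fun x => if h : x = k₂ then k₂ else (hsucc x h).choose
  have hf : ∀ x (h : x ≠ k₂), r x (f x) ∧ ∀ z, r x z → z = f x := by
    intro x h
    have := (hsucc x h).choose_spec
    simp only [f, dif_neg h]
    exact ⟨this.1, fun z hz => this.2 z hz⟩
  have hfk2 : f k₂ = k₂ := by simp [f]
  -- every world is an iterate of f on k₁
  have hiter : ∀ x, Relation.ReflTransGen r k₁ x → ∃ n, f^[n] k₁ = x := by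
    intro x hx
    induction hx with
    | refl => exact ⟨0, rfl⟩
    | @tail b c _ hstep ih =>
      rcases ih with ⟨n, hn⟩
      have hb : b ≠ k₂ := fun hb => h2.2 c (hb ▸ hstep)
      refine ⟨n + 1, ?_⟩
      rw [Function.iterate_succ_apply', hn]
      exact ((hf b hb).2 c hstep).symm
  obtain ⟨N, hN⟩ := hiter k₂ (hfrom k₂)
  -- past N, iterates are stuck at k₂
  have hstuck : ∀ n, N ≤ n → f^[n] k₁ = k₂ := by
    intro n hn
    obtain ⟨m, rfl⟩ := Nat.exists_eq_add_of_le hn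
    rw [Nat.add_comm, Function.iterate_add_apply, hN]
    induction m with
    | zero => rfl
    | succ m ih => rw [Function.iterate_succ_apply', ih (Nat.le_add_right N m), hfk2]
  -- surjection from Fin (N+1)
  have hsurj : Function.Surjective (fun i : Fin (N + 1) => f^[i.1] k₁) := by
    intro x
    obtain ⟨n, hn⟩ := hiter x (hfrom x)
    by_cases h : n ≤ N
    · exact ⟨⟨n, Nat.lt_succ_of_le h⟩, hn⟩
    · refine ⟨⟨N, Nat.lt_succ_self N⟩, ?_⟩
      simp only
      rw [hN, ← hn, hstuck n (le_of_not_ge h)]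
  exact Finite.of_surjective _ hsurj
end

section
/- In the fragment without nominals, retrieve, store, and quantifiers (pure multi-modal propositional logic over single relation symbols), the locally-confluent counterexample models are elementarily equivalent: let M have worlds {0,1,a,b} with edges 0→1, 1→0, 0→a, 1→b and p holding exactly at a and b; let N have worlds {0,1,2,3,...} ∪ {a₀,b₁,a₂,b₃,...} with edges n→n+1, 2n→a_{2n}, 2n+1→b_{2n+1}, and p holding exactly at the aᵢ and bᵢ worlds. Then for every sentence φ built from p, Boolean connectives, and ⟨λ⟩, (M,0) ⊨ φ iff (N,0) ⊨ φ. -/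
/-- Sentences of pure (multi-)modal propositional logic over one relation
symbol and one propositional symbol `p`: `φ ::= p | ⋀Φ | ¬φ | ⟨λ⟩φ`. -/
inductive SenML : Type
  | prop : SenML
  | conj (n : ℕ) : (Fin n → SenML) → SenML
  | neg : SenML → SenML
  | pos : SenML → SenML

/-- Kripke satisfaction for `SenML` in a model given by an accessibility
relation and a valuation for `p`. -/
def satML {W : Type} (rel : W → W → Prop) (val : W → Prop) : W → SenML → Prop
  | w, .prop => val w
  | w, .conj _ f => ∀ i, satML rel val w (f i)
  | w, .neg φ => ¬ satML rel val w φ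
  | w, .pos φ => ∃ v, rel w v ∧ satML rel val v φ

/-- The worlds of the four-world model `M`. -/
inductive WM : Type
  | w0 | w1 | wa | wb

/-- Accessibility of `M`: `0→1`, `1→0`, `0→a`, `1→b`. -/
def relM : WM → WM → Prop
  | .w0, .w1 => True
  | .w1, .w0 => True
  | .w0, .wa => True
  | .w1, .wb => True
  | _, _ => False

/-- `p` holds exactly at `a` and `b` in `M`. -/
def valM : WM → Prop
  | .wa => True
  | .wb => True
  | _ => False

/-- The worlds of the infinite model `N`: `inl n` is the world `n` and `inr n`
is the extra world `cₙ`. -/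
abbrev WN : Type := ℕ ⊕ ℕ

/-- Accessibility of `N`: `n → n+1` and `n → cₙ`. -/
def relN : WN → WN → Prop := fun x y =>
  (∃ n, x = Sum.inl n ∧ y = Sum.inl (n + 1)) ∨ (∃ n, x = Sum.inl n ∧ y = Sum.inr n)

/-- `p` holds exactly at the worlds `cₙ` in `N`. -/
def valN : WN → Prop := fun x => ∃ n, x = Sum.inr n
def ZB : WM → WN → Prop
  | .w0, .inl n => Even n
  | .w1, .inl n => Odd n
  | .wa, .inr _ => True
  | .wb, .inr _ => True
  | _, _ => False

lemma key : ∀ (φ : SenML) (w : WM) (x : WN), ZB w x →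
    (satML relM valM w φ ↔ satML relN valN x φ) := by
  intro φ
  induction φ with
  | prop =>
    intro w x h
    cases w <;> cases x <;> simp_all [ZB, satML, valM, valN]
  | conj n f ih =>
    intro w x h
    simp only [satML]
    exact forall_congr' fun i => ih i w x h
  | neg φ ih =>
    intro w x h
    simp only [satML]
    exact not_congr (ih w x h)
  | pos φ ih =>
    intro w x h
    simp only [satML]
    constructor
    · rintro ⟨v, hv, hs⟩
      cases w with
      | w0 =>
        obtain ⟨n, rfl⟩ : ∃ n, x = Sum.inl n := by
          cases x with
          | inl n => exact ⟨n, rfl⟩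
          | inr n => exact absurd h (by simp [ZB])
        cases v with
        | w1 =>
          refine ⟨Sum.inl (n+1), Or.inl ⟨n, rfl, rfl⟩, ?_⟩
          exact (ih _ _ (by simpa [ZB] using (show Even n from h).add_one)).mp hs
        | wa =>
          exact ⟨Sum.inr n, Or.inr ⟨n, rfl, rfl⟩, (ih _ _ (by simp [ZB])).mp hs⟩
        | w0 => exact absurd hv (by simp [relM])
        | wb => exact absurd hv (by simp [relM])
      | w1 =>
        obtain ⟨n, rfl⟩ : ∃ n, x = Sum.inl n := by
          cases x with
          | inl n => exact ⟨n, rfl⟩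
          | inr n => exact absurd h (by simp [ZB])
        cases v with
        | w0 =>
          refine ⟨Sum.inl (n+1), Or.inl ⟨n, rfl, rfl⟩, ?_⟩
          exact (ih _ _ (by simpa [ZB] using (show Odd n from h).add_one)).mp hs
        | wb =>
          exact ⟨Sum.inr n, Or.inr ⟨n, rfl, rfl⟩, (ih _ _ (by simp [ZB])).mp hs⟩
        | w1 => exact absurd hv (by simp [relM])
        | wa => exact absurd hv (by simp [relM])
      | wa => exact absurd hv (by cases v <;> simp [relM])
      | wb => exact absurd hv (by cases v <;> simp [relM])
    · rintro ⟨v, hv, hs⟩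
      rcases hv with ⟨n, rfl, rfl⟩ | ⟨n, rfl, rfl⟩
      · cases w with
        | w0 =>
          refine ⟨WM.w1, trivial, ?_⟩
          exact (ih _ _ (by simpa [ZB] using (show Even n from h).add_one)).mpr hs
        | w1 =>
          refine ⟨WM.w0, trivial, ?_⟩
          exact (ih _ _ (by simpa [ZB] using (show Odd n from h).add_one)).mpr hs
        | wa => exact absurd h (by simp [ZB])
        | wb => exact absurd h (by simp [ZB])
      · cases w with
        | w0 => exact ⟨WM.wa, trivial, (ih _ _ (by simp [ZB])).mpr hs⟩
        | w1 => exact ⟨WM.wb, trivial, (ih _ _ (by simp [ZB])).mpr hs⟩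
        | wa => exact absurd h (by simp [ZB])
        | wb => exact absurd h (by simp [ZB])

/-- the two locally-confluent counterexample models are
elementarily equivalent in the pure modal fragment: for every sentence built
from `p`, Boolean connectives and `⟨λ⟩`, `(M,0) ⊨ φ` iff `(N,0) ⊨ φ`. -/
theorem counterexample_models_elementarily_equivalent :
    ∀ φ : SenML, satML relM valM WM.w0 φ ↔ satML relN valN (Sum.inl 0) φ := by
  intro φ
  exact key φ WM.w0 (Sum.inl 0) (by simp [ZB])
end
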